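/- arXiv:2409.16274 — 14 statements merged into one kernel-verified Lean document; each statement's English description precedes it below -/
import Mathlib

section
/- Let ≺ be a dense transitive relation on a set X and let ≼ be another relation on X. Then the following conditions are equivalent: (i) there exist a set Y, a dense transitive relation ≺' on Y, and a morphism f : (X,≺) → (Y,≺') such that ≼ is the pull-back of ≺' through f, i.e., a ≼ b iff f(a) ≺' f(b); (ii) ≼ is dense and transitive, and the identity map is a morphism (X,≺) → (X,≼); (iii) ≼ is transitive, ≺ ⊆ ≼, and for every a ∈ X the set a^≺ is ≼-cofinal in a^≼, i.e., for every b with b ≼ a there is c with c ≺ a and b ≼ c; (iv) ≼ is transitive, ≺ ⊆ ≼, and ≼ = ≼ ∘ ≺; (v) ≼ is transitive, ≺ ⊆ ≼, ≼ = ≼ ∘ ≺ ∘ ≼, and ≼ is left ≺-continuous. -/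
universe u v

section Defs

variable {X : Type u} {Y : Type v}

/-- Composition of relations: `a (R ∘ R') b` iff there is `c` with `R a c` and `R' c b`. -/
def RelComp (R R' : X → X → Prop) : X → X → Prop := fun a b => ∃ c, R a c ∧ R' c b

/-- Containment of relations: `R ⊆ R'`. -/
def RelLE (R R' : X → X → Prop) : Prop := ∀ a b, R a b → R' a b

/-- A relation is dense if `R ⊆ R ∘ R`. -/
def RelDense (R : X → X → Prop) : Prop := ∀ a b, R a b → ∃ c, R a c ∧ R c b

/-- The induced preorder `≤_≺`: `a ≤_≺ b` iff `a^≺ ⊆ b^≺`. -/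
def IndLE (R : X → X → Prop) : X → X → Prop := fun a b => ∀ x, R x a → R x b

/-- A morphism between sets with relations: monotone and continuous. -/
def IsRelMorphism (P : X → X → Prop) (Q : Y → Y → Prop) (f : X → Y) : Prop :=
  (∀ a b, P a b → Q (f a) (f b)) ∧ (∀ a b, Q b (f a) → ∃ a', P a' a ∧ Q b (f a'))

/-- `L` is left `P`-continuous: `P ∘ L ⊆ P ∘ L ∘ P`. -/
def LeftCont (P L : X → X → Prop) : Prop :=
  ∀ a b, RelComp P L a b → RelComp P (RelComp L P) a b

/-- `Q` is a `P`-prenormal relation: transitive, `P ⊆ Q` and `Q = Q ∘ P`. -/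
def Prenormal (P Q : X → X → Prop) : Prop :=
  Transitive Q ∧ RelLE P Q ∧ ∀ a b, Q a b ↔ RelComp Q P a b

/-- The pair `(Q, L)` is admissible: `L` is a preorder and
`a^{L∘Q} ⊆ b^{L∘Q}` implies `L a b`. -/
def Admissible (Q L : X → X → Prop) : Prop :=
  Reflexive L ∧ Transitive L ∧
    ∀ a b, (∀ x, RelComp L Q x a → RelComp L Q x b) → L a b

/-- The pair `(Q, L)` is auxiliary: `Q ⊆ L` and `L ∘ Q ∘ L ⊆ Q`. -/
def Auxiliary (Q L : X → X → Prop) : Prop :=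
  RelLE Q L ∧ RelLE (RelComp L (RelComp Q L)) Q

/-- The pair `(Q, L)` is minimal admissible: `L` is the preorder induced by `Q`. -/
def MinimalAdmissible (Q L : X → X → Prop) : Prop :=
  ∀ a b, L a b ↔ IndLE Q a b

/-- The pair `(R, L)` is left `R`-closed. -/
def LeftClosed (R L : X → X → Prop) : Prop :=
  ∀ a b, (∀ c, R c a → RelComp R L c b) → RelComp (IndLE R) L a b

/-- Axiom (W2) for `(X, Q, L)`. -/
def AxiomW2 (Q L : X → X → Prop) : Prop :=
  ∀ a c, (∀ b, Q b a → L b c) → L a c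

/-- Axiom (W1): every `a` admits a `P`-increasing sequence in `a^P`, cofinal in `a^P`. -/
def AxiomW1 (P : X → X → Prop) : Prop :=
  ∀ a, ∃ f : ℕ → X, (∀ k, P (f k) (f (k + 1))) ∧ (∀ k, P (f k) a) ∧
    ∀ b, P b a → ∃ k, P b (f k)

/-- `(X, z, P)` is a W-set. -/
def IsWSet (P : X → X → Prop) (z : X) : Prop :=
  Transitive P ∧ (∀ a, P z a) ∧ AxiomW1 P

/-- Order on admissible pairs. -/
def PairLE (P₁ L₁ P₂ L₂ : X → X → Prop) : Prop :=
  RelLE P₁ P₂ ∧ RelLE L₁ L₂ ∧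
    ∀ a b, (∀ x, RelComp L₁ P₁ x a → RelComp L₁ P₁ x b) →
      ∀ x, RelComp L₂ P₂ x a → RelComp L₂ P₂ x b

/-- `L` is a preorder satisfying the three generating conditions over base `P` and relation `R`. -/
def GenGood (P R L : X → X → Prop) : Prop :=
  Reflexive L ∧ Transitive L ∧
    (∀ a b, IndLE P a b → L a b) ∧
    (∀ a b, R a b → L a b) ∧
    ∀ a b, (∀ c, P c a → L c b) → L a b

/-- `R` is `P`-almost transitive: `P ∘ R ∘ P ∘ R ∘ P ⊆ P ∘ R ∘ P`. -/
def AlmostTransitive (P R : X → X → Prop) : Prop :=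
  ∀ a b, RelComp P (RelComp R (RelComp P (RelComp R P))) a b →
    RelComp P (RelComp R P) a b

end Defs

section AddDefs

variable {S : Type u} {T : Type v} [AddCommMonoid S] [AddCommMonoid T]

/-- A relation on a monoid is additively closed. -/
def AddClosed (R : S → S → Prop) : Prop :=
  ∀ a b a' b', R a b → R a' b' → R (a + a') (b + b')

/-- Axiom (W4). -/
def AxiomW4 (P : S → S → Prop) : Prop :=
  ∀ a b c, P a (b + c) → ∃ b' c', P b' b ∧ P c' c ∧ P a (b' + c')

/-- `(S, P)` is a W-semigroup. -/
def IsWSemigroup (P : S → S → Prop) : Prop :=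
  Transitive P ∧ (∀ a, P 0 a) ∧ AddClosed P ∧ AxiomW1 P ∧ AxiomW4 P

/-- A W-morphism between W-semigroups. -/
def IsWMorphism (P : S → S → Prop) (Q : T → T → Prop) (f : S → T) : Prop :=
  f 0 = 0 ∧ (∀ a b, f (a + b) = f a + f b) ∧ IsRelMorphism P Q f

/-- The kernel preorder of a map `f` with respect to the relation `PT` on the codomain. -/
def kerLE (PT : T → T → Prop) (f : S → T) : S → S → Prop :=
  fun a b => ∀ x, PT x (f a) → PT x (f b)

/-- An ideal of `(S, P)`. -/
def IsIdeal (P : S → S → Prop) (I : Set S) : Prop :=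
  (0 : S) ∈ I ∧ (∀ a b, a ∈ I → b ∈ I → a + b ∈ I) ∧ ∀ a b, P a b → b ∈ I → a ∈ I

/-- A closed ideal of `(S, P)`. -/
def IsClosedIdeal (P : S → S → Prop) (I : Set S) : Prop :=
  IsIdeal P I ∧ ∀ a, (∀ x, P x a → x ∈ I) → a ∈ I

/-- The preorder `≤_I` associated with an ideal `I`. -/
def idealLE (P : S → S → Prop) (I : Set S) : S → S → Prop :=
  fun a b => ∀ x, P x a → ∃ y ∈ I, P x (b + y)

/-- The ideal `I_α = {a : a ≤ 0}` associated with a pair whose preorder is `L`. -/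
def pairIdeal (L : S → S → Prop) : Set S := {a | L a 0}

/-- The sum of two relations. -/
def RelAdd (R R' : S → S → Prop) : S → S → Prop :=
  fun x y => ∃ a b a' b', R a b ∧ R' a' b' ∧ x = a + a' ∧ y = b + b'

/-- The additive closure of a relation. -/
def AddClosure (R : S → S → Prop) : S → S → Prop :=
  fun x y => ∃ n : ℕ, 0 < n ∧ ∃ a b : Fin n → S,
    (∀ i, R (a i) (b i)) ∧ x = ∑ i, a i ∧ y = ∑ i, b i

/-- `L` is a preorder satisfying the four additive generating conditions. -/
def GenGoodAdd (P R L : S → S → Prop) : Prop :=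
  GenGood P R L ∧ AddClosed L

/-- `s` is a supremum of the sequence `f` with respect to the induced preorder of `P`. -/
def IsSupSeq (P : S → S → Prop) (f : ℕ → S) (s : S) : Prop :=
  (∀ n, IndLE P (f n) s) ∧ ∀ c, (∀ n, IndLE P (f n) c) → IndLE P s c

/-- Axiom (O1): every increasing sequence has a supremum. -/
def AxiomO1 (P : S → S → Prop) : Prop :=
  ∀ f : ℕ → S, (∀ n, IndLE P (f n) (f (n + 1))) → ∃ s, IsSupSeq P f s

/-- Compact containment relation associated with `IndLE P`. -/
def WayBelow (P : S → S → Prop) (a b : S) : Prop :=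
  ∀ (f : ℕ → S) (s : S), (∀ n, IndLE P (f n) (f (n + 1))) → IsSupSeq P f s →
    IndLE P b s → ∃ n, IndLE P a (f n)

/-- `S` has almost refinement. -/
def HasAlmostRefinement (P : S → S → Prop) : Prop :=
  ∀ a₁ a₂ a₁' a₂' b₁ b₂ : S, P a₁' a₁ → P a₂' a₂ → P (a₁ + a₂) (b₁ + b₂) →
    ∃ x₁₁ x₁₂ x₂₁ x₂₂ : S,
      P a₁' (x₁₁ + x₁₂) ∧ P a₂' (x₂₁ + x₂₂) ∧ P (x₁₁ + x₂₁) b₁ ∧ P (x₁₂ + x₂₂) b₂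

/-- A relation `R` has `P`-almost refinement. -/
def RelAlmostRefinement (P R : S → S → Prop) : Prop :=
  ∀ (m n : ℕ), 0 < m → 0 < n → ∀ (a a' : Fin m → S) (b : Fin n → S),
    (∀ i, P (a' i) (a i)) →
    RelComp P (RelComp R P) (∑ i, a i) (∑ j, b j) →
    ∃ x y : Fin m → Fin n → S,
      (∀ i, P (a' i) (∑ j, x i j)) ∧
      (∀ i j, RelComp P (RelComp R P) (x i j) (y i j)) ∧
      (∀ j, P (∑ i, y i j) (b j))

end AddDefs

/-- characterizations of pull-back relations (Lemma 3.2 of the paper). -/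
theorem statement0 {X : Type u} (P L : X → X → Prop)
    (hPtrans : Transitive P) (hPdense : RelDense P) :
    List.TFAE [
      (∃ (Y : Type u) (Q : Y → Y → Prop) (f : X → Y),
        RelDense Q ∧ Transitive Q ∧ IsRelMorphism P Q f ∧
          ∀ a b, L a b ↔ Q (f a) (f b)),
      (RelDense L ∧ Transitive L ∧ IsRelMorphism P L (id : X → X)),
      (Transitive L ∧ RelLE P L ∧ ∀ a b, L b a → ∃ c, P c a ∧ L b c),
      (Transitive L ∧ RelLE P L ∧ ∀ a b, L a b ↔ RelComp L P a b),
      (Transitive L ∧ RelLE P L ∧ (∀ a b, L a b ↔ RelComp L (RelComp P L) a b) ∧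
        LeftCont P L) ] :=  by
  tfae_have 1 → 3 := by
    rintro ⟨Y, Q, f, hQd, hQt, ⟨hmono, hcont⟩, hiff⟩
    refine ⟨fun a b c hab hbc => (hiff a c).2 (hQt ((hiff a b).1 hab) ((hiff b c).1 hbc)),
      fun a b hab => (hiff a b).2 (hmono a b hab), fun a b hba => ?_⟩
    obtain ⟨a', ha', hQ⟩ := hcont a (f b) ((hiff b a).1 hba)
    exact ⟨a', ha', (hiff b a').2 hQ⟩
  tfae_have 3 → 4 := by
    rintro ⟨hLt, hPL, h3⟩
    refine ⟨hLt, hPL, fun a b => ⟨fun hab => ?_, ?_⟩⟩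
    · obtain ⟨c, hc, hc'⟩ := h3 b a hab
      exact ⟨c, hc', hc⟩
    · rintro ⟨c, hac, hcb⟩
      exact hLt hac (hPL _ _ hcb)
  tfae_have 4 → 5 := by
    rintro ⟨hLt, hPL, h4⟩
    refine ⟨hLt, hPL, fun a b => ⟨fun hab => ?_, ?_⟩, ?_⟩
    · obtain ⟨c, hac, hcb⟩ := (h4 a b).1 hab
      obtain ⟨d, hcd, hdb⟩ := hPdense c b hcb
      exact ⟨c, hac, d, hcd, hPL _ _ hdb⟩
    · rintro ⟨c, hac, d, hcd, hdb⟩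
      exact hLt (hLt hac (hPL _ _ hcd)) hdb
    · rintro a b ⟨c, hac, hcb⟩
      obtain ⟨e, hae, hec⟩ := hPdense a c hac
      obtain ⟨g, heg, hgb⟩ := (h4 e b).1 (hLt (hPL _ _ hec) hcb)
      exact ⟨e, hae, g, heg, hgb⟩
  tfae_have 5 → 2 := by
    rintro ⟨hLt, hPL, h5, hcont⟩
    refine ⟨fun a b hab => ?_, hLt, fun a b hab => hPL a b hab, fun a b hba => ?_⟩
    · obtain ⟨c, hac, d, hcd, hdb⟩ := (h5 a b).1 hab
      exact ⟨c, hac, hLt (hPL _ _ hcd) hdb⟩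
    · obtain ⟨c, hbc, d, hcd, hda⟩ := (h5 b a).1 hba
      obtain ⟨e, hce, g, heg, hga⟩ := hcont c a ⟨d, hcd, hda⟩
      exact ⟨g, hga, hLt hbc (hLt (hPL _ _ hce) heg)⟩
  tfae_have 2 → 1 := by
    rintro ⟨hd, ht, hm⟩
    exact ⟨X, L, id, hd, ht, hm, fun a b => Iff.rfl⟩
  tfae_finish
end

section
/- Let ≺ be a dense transitive relation on a set X and let (≺,≤) be an admissible pair. Then the following conditions are equivalent: (i) the pair (≺,≤) is ≺-prenormal (i.e., ≤ is left ≺-continuous) and left ≺-closed; (ii) setting ≼ := ≤ ∘ ≺ ∘ ≤, the pair (≼,≤) is an admissible ≺-prenormal pair which is minimal admissible and auxiliary; (iii) there is a dense transitive relation ≼ on X such that the pair (≼,≤) is an admissible ≺-prenormal pair which is minimal admissible and auxiliary; (iv) there is a dense transitive relation ≼ on X such that the pair (≼,≤) is an admissible ≺-prenormal pair which is auxiliary and such that (X,≼,≤) satisfies axiom (W2). -/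
universe u v

/-- characterizations of prenormal left-closed admissible pairs. -/
theorem statement1 {X : Type u} (P L : X → X → Prop)
    (hPtrans : Transitive P) (hPdense : RelDense P)
    (hadm : Admissible P L) :
    List.TFAE [
      (LeftCont P L ∧ LeftClosed P L),
      (Admissible (RelComp L (RelComp P L)) L ∧ Prenormal P (RelComp L (RelComp P L)) ∧
        LeftCont P L ∧ MinimalAdmissible (RelComp L (RelComp P L)) L ∧
        Auxiliary (RelComp L (RelComp P L)) L),
      (∃ Q : X → X → Prop, RelDense Q ∧ Transitive Q ∧ Admissible Q L ∧ Prenormal P Q ∧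
        LeftCont P L ∧ MinimalAdmissible Q L ∧ Auxiliary Q L),
      (∃ Q : X → X → Prop, RelDense Q ∧ Transitive Q ∧ Admissible Q L ∧ Prenormal P Q ∧
        LeftCont P L ∧ Auxiliary Q L ∧ AxiomW2 Q L) ] := by
  obtain ⟨hLr, hLt, hA⟩ := hadm
  -- P ⊆ L
  have hPL : ∀ a b, P a b → L a b := by
    intro a b hab
    apply hA
    rintro x ⟨c, hxc, hca⟩
    exact ⟨c, hxc, hPtrans hca hab⟩
  -- IndLE P ⊆ L
  have hIndL : ∀ a b, IndLE P a b → L a b := by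
    intro a b h
    apply hA
    rintro x ⟨c, hxc, hca⟩
    exact ⟨c, hxc, h c hca⟩
  set Q : X → X → Prop := RelComp L (RelComp P L) with hQdef
  have hQL : ∀ a b, Q a b → L a b := by
    rintro a b ⟨u, hau, v, huv, hvb⟩
    exact hLt (hLt hau (hPL _ _ huv)) hvb
  have hPQ : ∀ a b, P a b → Q a b := by
    intro a b hab
    obtain ⟨c, hac, hcb⟩ := hPdense a b hab
    exact ⟨a, hLr a, c, hac, hPL _ _ hcb⟩
  have hQRight : ∀ a b c, Q a b → L b c → Q a c := by
    rintro a b c ⟨u, hau, v, huv, hvb⟩ hbc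
    exact ⟨u, hau, v, huv, hLt hvb hbc⟩
  have hQLeft : ∀ a b c, L a b → Q b c → Q a c := by
    rintro a b c hab ⟨u, hbu, v, huv, hvc⟩
    exact ⟨u, hLt hab hbu, v, huv, hvc⟩
  tfae_have 1 → 2
  | ⟨hlc, hlcl⟩ => by
    -- transitivity of Q
    have hQtrans : Transitive Q := by
      rintro a b c ⟨u, hau, v, huv, hvb⟩ ⟨u', hbu', v', hu'v', hv'c⟩
      obtain ⟨s, hus, t, hst, htu'⟩ := hlc u u' ⟨v, huv, hLt hvb hbu'⟩
      exact ⟨u, hau, s, hus,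
        hLt hst (hLt (hPL _ _ htu') (hLt (hPL _ _ hu'v') hv'c))⟩
    -- Q = Q ∘ P
    have hQiff : ∀ a b, Q a b ↔ RelComp Q P a b := by
      intro a b
      constructor
      · rintro ⟨m, ham, n, hmn, hnb⟩
        obtain ⟨u, hmu, hun⟩ := hPdense m n hmn
        obtain ⟨s, hus, t, hst, htb⟩ := hlc u b ⟨n, hun, hnb⟩
        exact ⟨t, ⟨m, ham, s, hPtrans hmu hus, hst⟩, htb⟩
      · rintro ⟨c, ⟨m, ham, n, hmn, hnc⟩, hcb⟩
        obtain ⟨s, hms, t, hst, htc⟩ := hlc m c ⟨n, hmn, hnc⟩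
        exact ⟨m, ham, s, hms, hLt hst (hPL _ _ (hPtrans htc hcb))⟩
    -- the key admissibility claim for (Q, L)
    have hAdmQ3 : ∀ a b, (∀ x, RelComp L Q x a → RelComp L Q x b) → L a b := by
      intro a b H
      have H' : ∀ x, Q x a → Q x b := by
        intro x hx
        obtain ⟨c, hxc, hcb⟩ := H x ⟨x, hLr x, hx⟩
        exact hQLeft x c b hxc hcb
      have key : ∀ c, P c a → RelComp P L c b := by
        intro c hca
        obtain ⟨m, hcm, hma⟩ := hPdense c a hca
        obtain ⟨m', hmm', hm'a⟩ := hPdense m a hma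
        have hQma : Q m a := ⟨m, hLr m, m', hmm', hPL _ _ hm'a⟩
        obtain ⟨u, hmu, v, huv, hvb⟩ := H' m hQma
        obtain ⟨s, hcs, t, hst, htu⟩ := hlc c u ⟨m, hcm, hmu⟩
        obtain ⟨s', hts', t', hs't', ht'b⟩ := hlc t b ⟨v, hPtrans htu huv, hvb⟩
        exact ⟨s, hcs,
          hLt hst (hLt (hPL _ _ hts') (hLt hs't' (hPL _ _ ht'b)))⟩
      obtain ⟨e, hae, heb⟩ := hlcl a b key
      exact hLt (hIndL a e hae) heb
    have hMin : MinimalAdmissible Q L := by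
      intro a b
      constructor
      · intro hab x hxa
        exact hQRight x a b hxa hab
      · intro h
        apply hAdmQ3
        rintro x ⟨c, hxc, hca⟩
        exact ⟨x, hLr x, h x (hQLeft x c a hxc hca)⟩
    exact ⟨⟨hLr, hLt, hAdmQ3⟩, ⟨hQtrans, hPQ, hQiff⟩, hlc, hMin,
      hQL, fun a b ⟨u, hau, v, huv, hvb⟩ => hQLeft a u b hau (hQRight u v b huv hvb)⟩
  tfae_have 2 → 3
  | ⟨hadmQ, hpre, hlc, hmin, haux⟩ => by
    refine ⟨Q, ?_, hpre.1, hadmQ, hpre, hlc, hmin, haux⟩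
    intro a b hab
    obtain ⟨c, hac, hcb⟩ := (hpre.2.2 a b).1 hab
    exact ⟨c, hac, hpre.2.1 c b hcb⟩
  tfae_have 3 → 4
  | ⟨Q', hd, ht, hadmQ, hpre, hlc, hmin, haux⟩ => by
    refine ⟨Q', hd, ht, hadmQ, hpre, hlc, haux, ?_⟩
    intro a c h
    apply (hmin a c).2
    intro x hxa
    obtain ⟨y, hxy, hya⟩ := hd x a hxa
    exact haux.2 x c ⟨x, hadmQ.1 x, y, hxy, h y hya⟩
  tfae_have 4 → 1
  | ⟨Q', hd, ht, hadmQ, hpre, hlc, haux, hw2⟩ => by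
    refine ⟨hlc, ?_⟩
    intro a b H
    refine ⟨a, fun x h => h, ?_⟩
    apply hw2
    intro y hya
    obtain ⟨c, hyc, hca⟩ := (hpre.2.2 y a).1 hya
    obtain ⟨d, hcd, hdb⟩ := H c hca
    have hyd : Q' y d := (hpre.2.2 y d).2 ⟨c, hyc, hcd⟩
    exact hadmQ.2.1 (haux.1 y d hyd) hdb
  tfae_finish
end

section
/- Let ≺ be a dense transitive relation on a set X, let ≼ be a ≺-prenormal relation on X, and let ≤ be a preorder on X. If the pair (≼,≤) is admissible, then so is the pair (≺,≤). Moreover, in this case the following are equivalent: (i) (≺,≤) is a ≺-prenormal pair; (ii) (≼,≤) is a ≼-prenormal pair. Furthermore, (≺,≤) is ≺-prenormal and left ≺-closed if and only if (≼,≤) is ≼-prenormal and left ≼-closed. -/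
universe u v

/-- admissibility and prenormality transfer between `P` and a `P`-prenormal `Q`. -/
theorem statement2 {X : Type u} (P Q L : X → X → Prop)
    (hPtrans : Transitive P) (hPdense : RelDense P)
    (hQ : Prenormal P Q)
    (hLrefl : Reflexive L) (hLtrans : Transitive L)
    (hadm : Admissible Q L) :
    Admissible P L ∧
    ((Prenormal P P ∧ LeftCont P L) ↔ (Prenormal Q Q ∧ LeftCont Q L)) ∧
    ((Prenormal P P ∧ LeftCont P L ∧ LeftClosed P L) ↔
      (Prenormal Q Q ∧ LeftCont Q L ∧ LeftClosed Q L)) := by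

  obtain ⟨hQtrans, hPQ, hQP⟩ := hQ
  have hQL : ∀ a b, Q a b → L a b := by
    intro a b hab
    refine hadm.2.2 a b ?_
    rintro x ⟨c, hLxc, hQca⟩
    exact ⟨c, hLxc, hQtrans hQca hab⟩
  have hAdmP : Admissible P L := by
    refine ⟨hLrefl, hLtrans, fun a b h => hadm.2.2 a b ?_⟩
    rintro x ⟨c, hLxc, hQca⟩
    obtain ⟨d, hQcd, hPda⟩ := (hQP c a).1 hQca
    obtain ⟨e, hLxe, hPeb⟩ := h x ⟨d, hLtrans hLxc (hQL c d hQcd), hPda⟩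
    exact ⟨e, hLxe, hPQ e b hPeb⟩
  have hPrenP : Prenormal P P :=
    ⟨hPtrans, fun a b h => h, fun a b =>
      ⟨fun h => hPdense a b h, fun ⟨c, h1, h2⟩ => hPtrans h1 h2⟩⟩
  have hPrenQ : Prenormal Q Q := by
    refine ⟨hQtrans, fun a b h => h, fun a b => ⟨?_, fun ⟨c, h1, h2⟩ => hQtrans h1 h2⟩⟩
    intro h
    obtain ⟨c, h1, h2⟩ := (hQP a b).1 h
    exact ⟨c, h1, hPQ _ _ h2⟩
  have hContPQ : LeftCont P L → LeftCont Q L := by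
    rintro hcont a b ⟨c, hQac, hLcb⟩
    obtain ⟨c', hQac', hPc'c⟩ := (hQP a c).1 hQac
    obtain ⟨d, hPc'd, e, hLde, hPeb⟩ := hcont c' b ⟨c, hPc'c, hLcb⟩
    exact ⟨d, hQtrans hQac' (hPQ _ _ hPc'd), e, hLde, hPQ _ _ hPeb⟩
  have hContQP : LeftCont Q L → LeftCont P L := by
    rintro hcont a b ⟨c, hPac, hLcb⟩
    obtain ⟨a', hPaa', hPa'c⟩ := hPdense a c hPac
    obtain ⟨d, hQa'd, e, hLde, hQeb⟩ := hcont a' b ⟨c, hPQ _ _ hPa'c, hLcb⟩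
    obtain ⟨e', hQee', hPe'b⟩ := (hQP e b).1 hQeb
    exact ⟨a', hPaa',
      e', hLtrans (hLtrans (hQL _ _ hQa'd) hLde) (hQL _ _ hQee'), hPe'b⟩
  have hClosedPQ : LeftClosed P L → LeftClosed Q L := by
    intro hclosed a b h
    have h' : ∀ c, P c a → RelComp P L c b := by
      intro c hPca
      obtain ⟨c', hPcc', hPc'a⟩ := hPdense c a hPca
      obtain ⟨d, hQc'd, hLdb⟩ := h c' (hPQ _ _ hPc'a)
      exact ⟨c', hPcc', hLtrans (hQL _ _ hQc'd) hLdb⟩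
    obtain ⟨m, hind, hLmb⟩ := hclosed a b h'
    refine ⟨m, ?_, hLmb⟩
    intro x hQxa
    obtain ⟨y, hQxy, hPya⟩ := (hQP x a).1 hQxa
    exact (hQP x m).2 ⟨y, hQxy, hind y hPya⟩
  have hClosedQP : LeftClosed Q L → LeftClosed P L := by
    intro hclosed a b h
    have h' : ∀ c, Q c a → RelComp Q L c b := by
      intro c hQca
      obtain ⟨d, hQcd, hPda⟩ := (hQP c a).1 hQca
      obtain ⟨e, hPde, hLeb⟩ := h d hPda
      exact ⟨e, hQtrans hQcd (hPQ _ _ hPde), hLeb⟩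
    obtain ⟨m, hind, hLmb⟩ := hclosed a b h'
    have hLam : L a m := hadm.2.2 a m (by rintro x ⟨c, hLxc, hQca⟩; exact ⟨c, hLxc, hind c hQca⟩)
    exact ⟨a, fun x hx => hx, hLtrans hLam hLmb⟩
  refine ⟨hAdmP, ⟨fun ⟨_, hc⟩ => ⟨hPrenQ, hContPQ hc⟩, fun ⟨_, hc⟩ => ⟨hPrenP, hContQP hc⟩⟩,
    ⟨fun ⟨_, hc, hcl⟩ => ⟨hPrenQ, hContPQ hc, hClosedPQ hcl⟩,
     fun ⟨_, hc, hcl⟩ => ⟨hPrenP, hContQP hc, hClosedQP hcl⟩⟩⟩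
end

section
/- Let (S,≺) be a W-semigroup and let (≺,≤) be an admissible pair. Then (≺,≤) is ≺-normal (i.e., ≤ is additively closed and left ≺-continuous) and left ≺-closed if and only if there exists a relation ≼ on S that is ≺-normal (additively closed and ≺-prenormal), auxiliary for ≤ (≼ ⊆ ≤ and ≤ ∘ ≼ ∘ ≤ ⊆ ≼), and induces ≤ (a ≤ b iff a^≼ ⊆ b^≼ for all a,b ∈ S). -/
universe u v

/-- an admissible pair `(≺,≤)` on a W-semigroup is ≺-normal and left ≺-closed
iff `≤` is induced by some ≺-normal auxiliary relation. -/
theorem statement3 {S : Type u} [AddCommMonoid S] (P L : S → S → Prop)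
    (hW : IsWSemigroup P) (hadm : Admissible P L) :
    (AddClosed L ∧ LeftCont P L ∧ LeftClosed P L) ↔
      ∃ Q : S → S → Prop, AddClosed Q ∧ Prenormal P Q ∧ Auxiliary Q L ∧
        ∀ a b, L a b ↔ IndLE Q a b := by
  obtain ⟨hPtrans, hP0, hPadd, hW1, hW4⟩ := hW
  obtain ⟨hLrefl, hLtrans, hadm3⟩ := hadm
  -- P ⊆ L
  have hPL : ∀ a b, P a b → L a b := by
    intro a b hab
    apply hadm3
    rintro x ⟨c, hxc, hca⟩
    exact ⟨c, hxc, hPtrans hca hab⟩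
  -- density of P
  have hdense : ∀ a b, P a b → ∃ c, P a c ∧ P c b := by
    intro a b hab
    obtain ⟨f, _, hf2, hf3⟩ := hW1 b
    obtain ⟨k, hk⟩ := hf3 a hab
    exact ⟨f k, hk, hf2 k⟩
  constructor
  · rintro ⟨hLadd, hcont, _⟩
    refine ⟨RelComp L P, ?_, ⟨?_, ?_, ?_⟩, ⟨?_, ?_⟩, ?_⟩
    · -- additively closed
      rintro a b a' b' ⟨c, hac, hcb⟩ ⟨c', hac', hcb'⟩
      exact ⟨c + c', hLadd _ _ _ _ hac hac', hPadd _ _ _ _ hcb hcb'⟩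
    · -- transitive
      rintro a b e ⟨c, hac, hcb⟩ ⟨d, hbd, hde⟩
      exact ⟨d, hLtrans (hLtrans hac (hPL _ _ hcb)) hbd, hde⟩
    · -- P ⊆ Q
      intro a b hab
      exact ⟨a, hLrefl a, hab⟩
    · -- Q = Q ∘ P
      intro a b
      constructor
      · rintro ⟨c, hac, hcb⟩
        obtain ⟨d, hcd, hdb⟩ := hdense _ _ hcb
        exact ⟨d, ⟨c, hac, hcd⟩, hdb⟩
      · rintro ⟨c, ⟨d, had, hdc⟩, hcb⟩
        exact ⟨d, had, hPtrans hdc hcb⟩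
    · -- Q ⊆ L
      rintro a b ⟨c, hac, hcb⟩
      exact hLtrans hac (hPL _ _ hcb)
    · -- L ∘ Q ∘ L ⊆ Q
      rintro a b ⟨c, hac, d, ⟨e, hce, hed⟩, hdb⟩
      obtain ⟨u, heu, v, huv, hvb⟩ := hcont e b ⟨d, hed, hdb⟩
      exact ⟨v, hLtrans (hLtrans hac (hLtrans hce (hLtrans (hPL _ _ heu) huv))) (hLrefl v),
        hvb⟩
    · -- minimal admissible
      intro a b
      constructor
      · rintro hab x ⟨c, hxc, hca⟩
        obtain ⟨u, hcu, v, huv, hvb⟩ := hcont c b ⟨a, hca, hab⟩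
        exact ⟨v, hLtrans hxc (hLtrans (hPL _ _ hcu) huv), hvb⟩
      · intro h
        exact hadm3 a b h
  · rintro ⟨Q, hQadd, ⟨hQtrans, hPQ, hQP⟩, ⟨hQL, haux⟩, hmin⟩
    refine ⟨?_, ?_, ?_⟩
    · -- additively closed
      intro a b a' b' hab hab'
      rw [hmin]
      intro x hx
      obtain ⟨c, hxc, hc⟩ := (hQP x (a + a')).mp hx
      obtain ⟨a₀, a₀', ha₀, ha₀', hc'⟩ := hW4 c a a' hc
      have hQ1 : Q a₀ b := haux _ _ ⟨a₀, hLrefl a₀, a, hPQ _ _ ha₀, hab⟩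
      have hQ2 : Q a₀' b' := haux _ _ ⟨a₀', hLrefl a₀', a', hPQ _ _ ha₀', hab'⟩
      exact hQtrans hxc (hQtrans (hPQ _ _ hc') (hQadd _ _ _ _ hQ1 hQ2))
    · -- left continuity
      rintro a b ⟨c, hac, hcb⟩
      obtain ⟨x, hax, hxc⟩ := hdense _ _ hac
      have hQxb : Q x b := haux _ _ ⟨x, hLrefl x, c, hPQ _ _ hxc, hcb⟩
      obtain ⟨y, hxy, hyb⟩ := (hQP x b).mp hQxb
      exact ⟨x, hax, y, hQL _ _ hxy, hyb⟩
    · -- left closedness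
      intro a b h
      refine ⟨a, fun x hx => hx, ?_⟩
      apply hadm3
      rintro x ⟨c, hxc, hca⟩
      obtain ⟨d, hcd, hdb⟩ := h c hca
      have hQcb : Q c b := haux _ _ ⟨c, hLrefl c, d, hPQ _ _ hcd, hdb⟩
      obtain ⟨e, hce, heb⟩ := (hQP c b).mp hQcb
      exact ⟨e, hLtrans hxc (hQL _ _ hce), heb⟩
end

section
/- Let (S,≺) be a W-semigroup and let ≼ be an additively closed transitive relation on S. Then ≼ is ≺-prenormal (hence ≺-normal) if and only if (S,≼) is a W-semigroup and the identity map is a W-morphism (S,≺) → (S,≼). -/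
universe u v

/-- an additively closed transitive relation `≼` is ≺-prenormal iff `(S,≼)` is a
W-semigroup and the identity is a W-morphism `(S,≺) → (S,≼)`. -/
theorem statement4 {S : Type u} [AddCommMonoid S] (P Q : S → S → Prop)
    (hW : IsWSemigroup P) (hQadd : AddClosed Q) (hQtrans : Transitive Q) :
    Prenormal P Q ↔ (IsWSemigroup Q ∧ IsWMorphism P Q (id : S → S)) := by
  obtain ⟨hPtrans, hP0, hPadd, hW1, hW4⟩ := hW
  constructor
  · rintro ⟨_, hPQ, hQP⟩
    refine ⟨⟨hQtrans, fun a => hPQ _ _ (hP0 a), hQadd, ?_, ?_⟩,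
      rfl, fun _ _ => rfl, hPQ, ?_⟩
    · -- AxiomW1 for Q
      intro a
      obtain ⟨f, hf1, hf2, hf3⟩ := hW1 a
      refine ⟨f, fun k => hPQ _ _ (hf1 k), fun k => hPQ _ _ (hf2 k), ?_⟩
      intro b hb
      obtain ⟨c, hbc, hca⟩ := (hQP b a).mp hb
      obtain ⟨k, hk⟩ := hf3 c hca
      exact ⟨k, hQtrans hbc (hPQ _ _ hk)⟩
    · -- AxiomW4 for Q
      intro a b c habc
      obtain ⟨d, had, hdbc⟩ := (hQP a (b + c)).mp habc
      obtain ⟨b', c', hb', hc', hd⟩ := hW4 d b c hdbc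
      exact ⟨b', c', hPQ _ _ hb', hPQ _ _ hc',
        hQtrans had (hPQ _ _ hd)⟩
    · -- continuity
      intro a b hba
      obtain ⟨c, hbc, hca⟩ := (hQP b a).mp hba
      exact ⟨c, hca, hbc⟩
  · rintro ⟨_, _, _, ⟨hmon, hcont⟩⟩
    refine ⟨hQtrans, hmon, fun a b => ⟨?_, ?_⟩⟩
    · intro hab
      obtain ⟨b', hb', hab'⟩ := hcont b a hab
      exact ⟨b', hab', hb'⟩
    · rintro ⟨c, hac, hcb⟩
      exact hQtrans hac (hmon _ _ hcb)
end

section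
/- Let (S,≺) be a W-semigroup and let α = (≼,≤) be a ≺-normal admissible pair on S (with ≼ a dense transitive relation). Define the relation ≼_α on S by a ≼_α b iff there is c with a ≤ c ≼ b. Then (S,≼_α) is a W-semigroup and the identity map on S is a W-morphism (S,≺) → (S,≼_α). -/
universe u v

/-- for a ≺-normal admissible pair `α = (≼,≤)`, the prequotient relation
`≼_α = ≤ ∘ ≼` makes `S` a W-semigroup and the identity a W-morphism `(S,≺) → (S,≼_α)`. -/
theorem statement5 {S : Type u} [AddCommMonoid S] (P Q L : S → S → Prop)
    (hW : IsWSemigroup P)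
    (hQdense : RelDense Q) (hQtrans : Transitive Q)
    (hadm : Admissible Q L)
    (hQadd : AddClosed Q) (hLadd : AddClosed L)
    (hpre : Prenormal P Q) (hcont : LeftCont P L) :
    IsWSemigroup (RelComp L Q) ∧ IsWMorphism P (RelComp L Q) (id : S → S) := by
  obtain ⟨hPtrans, hP0, hPadd, hPW1, hPW4⟩ := hW
  obtain ⟨hLrefl, hLtrans, hLadm⟩ := hadm
  obtain ⟨-, hPQ, hQP⟩ := hpre
  have hQL : ∀ a b, Q a b → L a b := fun a b hab =>
    hLadm a b (fun x ⟨c, hxc, hca⟩ => ⟨c, hxc, hQtrans hca hab⟩)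
  have hmono : ∀ a b, P a b → RelComp L Q a b := fun a b h => ⟨a, hLrefl a, hPQ a b h⟩
  refine ⟨⟨?_, ?_, ?_, ?_, ?_⟩, rfl, fun a b => rfl, ?_, ?_⟩
  · rintro a b c ⟨d, lad, qdb⟩ ⟨e, lbe, qec⟩
    exact ⟨e, hLtrans (hLtrans lad (hQL d b qdb)) lbe, qec⟩
  · exact fun a => ⟨0, hLrefl 0, hPQ 0 a (hP0 a)⟩
  · rintro a b a' b' ⟨c, h1, h2⟩ ⟨c', h1', h2'⟩
    exact ⟨c + c', hLadd _ _ _ _ h1 h1', hQadd _ _ _ _ h2 h2'⟩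
  · intro a
    obtain ⟨f, hmonoF, hfa, hcof⟩ := hPW1 a
    refine ⟨f, fun k => hmono _ _ (hmonoF k), fun k => hmono _ _ (hfa k), ?_⟩
    rintro b ⟨c, hbc, hca⟩
    obtain ⟨d, hcd, hda⟩ := (hQP c a).1 hca
    obtain ⟨k, hk⟩ := hcof d hda
    exact ⟨k, c, hbc, (hQP c (f k)).2 ⟨d, hcd, hk⟩⟩
  · rintro a b c ⟨d, had, hd⟩
    obtain ⟨e, hde, hebc⟩ := (hQP d (b + c)).1 hd
    obtain ⟨b', c', hb', hc', he⟩ := hPW4 e b c hebc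
    exact ⟨b', c', hmono _ _ hb', hmono _ _ hc', d, had, (hQP _ _).2 ⟨e, hde, he⟩⟩
  · exact hmono
  · rintro a b ⟨c, hbc, hca⟩
    obtain ⟨d, hcd, hda⟩ := (hQP c a).1 hca
    exact ⟨d, hda, c, hbc, hcd⟩
end

section
/- Let (S,≺_S) and (T,≺_T) be W-semigroups and let f : S → T be a W-morphism. Then: (i) the kernel pair ker(f) = (≺_S, ≤_f) is an admissible, ≺_S-normal, left ≺_S-closed pair; (ii) consequently, S equipped with the relation ≤_f ∘ ≺_S (i.e., a related to b iff a ≤_f c ≺_S b for some c) is a W-semigroup. -/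
universe u v

/-- the kernel pair of a W-morphism is an admissible ≺-normal left ≺-closed pair,
and `S` with the relation `≤_f ∘ ≺_S` is a W-semigroup. -/
theorem statement6 {S : Type u} {T : Type v} [AddCommMonoid S] [AddCommMonoid T]
    (P : S → S → Prop) (PT : T → T → Prop) (f : S → T)
    (hS : IsWSemigroup P) (hT : IsWSemigroup PT)
    (hf : IsWMorphism P PT f) :
    (Admissible P (kerLE PT f) ∧ AddClosed (kerLE PT f) ∧
      LeftCont P (kerLE PT f) ∧ LeftClosed P (kerLE PT f)) ∧
    IsWSemigroup (RelComp (kerLE PT f) P) := by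
  obtain ⟨hPtrans, hP0, hPadd, hPW1, hPW4⟩ := hS
  obtain ⟨hTtrans, hT0, hTadd, hTW1, hTW4⟩ := hT
  obtain ⟨hf0, hfadd, hfmono, hfcont⟩ := hf
  -- density of P
  have hdense : ∀ a b, P a b → ∃ c, P a c ∧ P c b := by
    intro a b hab
    obtain ⟨g, hg1, hg2, hg3⟩ := hPW1 b
    obtain ⟨k, hk⟩ := hg3 a hab
    exact ⟨g k, hk, hg2 k⟩
  have hLrefl : Reflexive (kerLE PT f) := fun a x hx => hx
  have hLtrans : Transitive (kerLE PT f) := fun a b c hab hbc x hx => hbc x (hab x hx)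
  have hLadd : AddClosed (kerLE PT f) := by
    intro a b a' b' hab ha'b' x hx
    rw [hfadd] at hx
    obtain ⟨u, v, hu, hv, huv⟩ := hTW4 x (f a) (f a') hx
    rw [hfadd]
    exact hTtrans huv (hTadd _ _ _ _ (hab u hu) (ha'b' v hv))
  refine ⟨⟨⟨hLrefl, hLtrans, ?_⟩, hLadd, ?_, ?_⟩, ?_, fun a => ⟨0, fun x hx => hx, hP0 a⟩, ?_, ?_, ?_⟩
  · -- admissibility
    intro a b h x hx
    obtain ⟨a', ha'a, hxa'⟩ := hfcont a x hx
    obtain ⟨c, hc1, hc2⟩ := h a' ⟨a', hLrefl a', ha'a⟩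
    exact hTtrans (hc1 x hxa') (hfmono c b hc2)
  · -- LeftCont
    intro a b ⟨c, hac, hcb⟩
    obtain ⟨d, had, hdc⟩ := hdense a c hac
    obtain ⟨b', hb'b, hdb'⟩ := hfcont b (f d) (hcb (f d) (hfmono d c hdc))
    exact ⟨d, had, b', fun x hx => hTtrans hx hdb', hb'b⟩
  · -- LeftClosed
    intro a b h
    refine ⟨a, fun x hx => hx, fun x hx => ?_⟩
    obtain ⟨c, hca, hxc⟩ := hfcont a x hx
    obtain ⟨d, hcd, hdb⟩ := h c hca
    exact hdb x (hTtrans hxc (hfmono c d hcd))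
  · -- Transitive R
    rintro a b b' ⟨c, hac, hcb⟩ ⟨c', hbc', hc'b'⟩
    obtain ⟨e, hec', hce⟩ := hfcont c' (f c) (hbc' (f c) (hfmono c b hcb))
    exact ⟨e, hLtrans hac (fun x hx => hTtrans hx hce), hPtrans hec' hc'b'⟩
  · -- AddClosed R
    rintro a b a' b' ⟨c, hac, hcb⟩ ⟨c', hac', hcb'⟩
    exact ⟨c + c', hLadd _ _ _ _ hac hac', hPadd _ _ _ _ hcb hcb'⟩
  · -- AxiomW1 R
    intro a
    obtain ⟨g, hg1, hg2, hg3⟩ := hPW1 a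
    refine ⟨g, fun k => ⟨g k, hLrefl _, hg1 k⟩, fun k => ⟨g k, hLrefl _, hg2 k⟩, ?_⟩
    rintro b ⟨c, hbc, hca⟩
    obtain ⟨k, hk⟩ := hg3 c hca
    exact ⟨k, c, hbc, hk⟩
  · -- AxiomW4 R
    rintro a b c ⟨d, had, hd⟩
    obtain ⟨b', c', hb', hc', hd'⟩ := hPW4 d b c hd
    exact ⟨b', c', ⟨b', hLrefl _, hb'⟩, ⟨c', hLrefl _, hc'⟩, d, had, hd'⟩
end

section
/- Let (S,≺) be a W-semigroup and let ≼ denote the relation ≤_≺ ∘ ≺ on S (i.e., a ≼ b iff there is c with a ≤_≺ c ≺ b). Then a subset I ⊆ S is a closed ideal of (S,≺) if and only if I is a closed ideal of (S,≼). -/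
universe u v

/-- a subset is a closed ideal of `(S,≺)` iff it is a closed ideal of
`(S, ≤_≺ ∘ ≺)`. -/
theorem statement8 {S : Type u} [AddCommMonoid S] (P : S → S → Prop)
    (hW : IsWSemigroup P) (I : Set S) :
    IsClosedIdeal P I ↔ IsClosedIdeal (RelComp (IndLE P) P) I := by
  have hPQ : ∀ a b, P a b → RelComp (IndLE P) P a b :=
    fun a b h => ⟨a, fun x hx => hx, h⟩
  constructor
  · rintro ⟨⟨h0, hadd, hdown⟩, hcl⟩
    refine ⟨⟨h0, hadd, ?_⟩, ?_⟩
    · rintro a b ⟨c, hac, hcb⟩ hb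
      have hc : c ∈ I := hdown c b hcb hb
      exact hcl a (fun x hx => hdown x c (hac x hx) hc)
    · intro a ha
      exact hcl a (fun x hx => ha x (hPQ x a hx))
  · rintro ⟨⟨h0, hadd, hdown⟩, hcl⟩
    have key : ∀ a c, IndLE P a c → c ∈ I → a ∈ I := by
      intro a c hac hc
      refine hcl a ?_
      rintro y ⟨e, hye, hea⟩
      exact hdown y c ⟨e, hye, hac e hea⟩ hc
    refine ⟨⟨h0, hadd, fun a b hab hb => hdown a b (hPQ a b hab) hb⟩, ?_⟩
    intro a ha
    refine hcl a ?_
    rintro x ⟨c, hxc, hca⟩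
    exact key x c hxc (ha c hca)
end

section
/- Let (S,≺) be a W-semigroup satisfying axiom (O1) (every ≤_≺-increasing sequence in S has a supremum with respect to ≤_≺) and such that ≺ ⊆ ≪, where ≪ is the compact containment relation associated with ≤_≺. Then the assignments I ↦ α_I = (≺,≤_I) and α ↦ I_α form a Galois connection between closed ideals of S and admissible ≺-normal left ≺-closed pairs α = (≺,≤) satisfying ≺ ∘ ≤ ⊆ ≺; in particular: (a) for every closed ideal I, α_I is an admissible ≺-normal left ≺-closed pair and I_{α_I} = I; (b) for every admissible ≺-normal left ≺-closed pair α = (≺,≤) with ≺ ∘ ≤ ⊆ ≺, the set I_α is a closed ideal and α_{I_α} ≤ α in the order on admissible pairs. -/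
universe u v

/-- the assignments `I ↦ α_I` and `α ↦ I_α` form a Galois connection between
closed ideals and admissible ≺-normal left ≺-closed pairs satisfying `≺ ∘ ≤ ⊆ ≺`. -/
theorem statement10 {S : Type u} [AddCommMonoid S] (P : S → S → Prop)
    (hW : IsWSemigroup P) (hO1 : AxiomO1 P)
    (hWB : ∀ a b, P a b → WayBelow P a b) :
    (∀ I J : Set S, IsClosedIdeal P I → IsClosedIdeal P J → I ⊆ J →
      PairLE P (idealLE P I) P (idealLE P J)) ∧
    (∀ L L' : S → S → Prop,
      (Admissible P L ∧ AddClosed L ∧ LeftCont P L ∧ LeftClosed P L ∧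
        (∀ a b, RelComp P L a b → P a b)) →
      (Admissible P L' ∧ AddClosed L' ∧ LeftCont P L' ∧ LeftClosed P L' ∧
        (∀ a b, RelComp P L' a b → P a b)) →
      PairLE P L P L' → pairIdeal L ⊆ pairIdeal L') ∧
    (∀ I : Set S, IsClosedIdeal P I →
      (Admissible P (idealLE P I) ∧ AddClosed (idealLE P I) ∧
        LeftCont P (idealLE P I) ∧ LeftClosed P (idealLE P I) ∧
        pairIdeal (idealLE P I) = I)) ∧
    (∀ L : S → S → Prop,
      Admissible P L → AddClosed L → LeftCont P L → LeftClosed P L →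
      (∀ a b, RelComp P L a b → P a b) →
      (IsClosedIdeal P (pairIdeal L) ∧ PairLE P (idealLE P (pairIdeal L)) P L)) := by
  obtain ⟨hT, h0, hA, hW1, hW4⟩ := hW
  -- density of P via (W1)
  have hdense : ∀ a b, P a b → ∃ c, P a c ∧ P c b := by
    intro a b hab
    obtain ⟨f, _, hf2, hf3⟩ := hW1 b
    obtain ⟨k, hk⟩ := hf3 a hab
    exact ⟨f k, hk, hf2 k⟩
  -- basic facts about idealLE
  have hrefl : ∀ I : Set S, (0:S) ∈ I → Reflexive (idealLE P I) := by
    intro I h0I a x hx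
    exact ⟨0, h0I, by simpa using hx⟩
  have hPsub : ∀ I : Set S, (0:S) ∈ I → ∀ a b, P a b → idealLE P I a b := by
    intro I h0I a b hab x hx
    exact ⟨0, h0I, by simpa using hT hx hab⟩
  have htrans : ∀ I : Set S, IsIdeal P I → Transitive (idealLE P I) := by
    rintro I ⟨h0I, haddI, hdnI⟩ a b c hab hbc x hx
    obtain ⟨y, hyI, hxy⟩ := hab x hx
    obtain ⟨b', y', hb', hy', hx'⟩ := hW4 x b y hxy
    obtain ⟨z, hzI, hbz⟩ := hbc b' hb'
    refine ⟨z + y, haddI _ _ hzI hyI, ?_⟩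
    have h2 : P (b' + y') ((c + z) + y) := hA _ _ _ _ hbz hy'
    have := hT hx' h2
    rwa [add_assoc] at this
  have hmono : ∀ I J : Set S, I ⊆ J → ∀ a b, idealLE P I a b → idealLE P J a b := by
    intro I J hIJ a b hab x hx
    obtain ⟨y, hyI, hxy⟩ := hab x hx
    exact ⟨y, hIJ hyI, hxy⟩
  -- admissibility of idealLE for ideals
  have hadm3 : ∀ I : Set S, IsIdeal P I → ∀ a b,
      (∀ x, RelComp (idealLE P I) P x a → RelComp (idealLE P I) P x b) →
      idealLE P I a b := by
    rintro I hI a b H x hx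
    obtain ⟨c, hxc, hca⟩ := hdense x a hx
    obtain ⟨d, hLcd, hPdb⟩ := H c ⟨c, hrefl I hI.1 c, hca⟩
    obtain ⟨y, hyI, hxdy⟩ := hLcd x hxc
    obtain ⟨d', y', hd', hy', hx'⟩ := hW4 x d y hxdy
    exact ⟨y, hyI, hT hx' (hA _ _ _ _ (hT hd' hPdb) hy')⟩
  have haddc : ∀ I : Set S, IsIdeal P I → AddClosed (idealLE P I) := by
    rintro I ⟨h0I, haddI, hdnI⟩ a b a' b' h h' x hx
    obtain ⟨u, v, hu, hv, hx'⟩ := hW4 x a a' hx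
    obtain ⟨y, hyI, h1⟩ := h u hu
    obtain ⟨y', hy'I, h2⟩ := h' v hv
    refine ⟨y + y', haddI _ _ hyI hy'I, ?_⟩
    have h3 : P (u + v) ((b + y) + (b' + y')) := hA _ _ _ _ h1 h2
    have := hT hx' h3
    rwa [add_add_add_comm] at this
  have hlc : ∀ I : Set S, IsIdeal P I → LeftCont P (idealLE P I) := by
    rintro I ⟨h0I, haddI, hdnI⟩ a b ⟨c, hac, hcb⟩
    obtain ⟨y, hyI, h1⟩ := hcb a hac
    obtain ⟨b', y', hb', hy', h2⟩ := hW4 a b y h1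
    refine ⟨b' + y', h2, b', ?_, hb'⟩
    intro z hz
    exact ⟨y', hdnI _ _ hy' hyI, hz⟩
  have hlcl : ∀ I : Set S, LeftClosed P (idealLE P I) := by
    intro I a b H
    refine ⟨a, fun x hx => hx, ?_⟩
    intro x hx
    obtain ⟨e, hxe, hLeb⟩ := H x hx
    exact hLeb x hxe
  -- part 1
  have part1 : ∀ I J : Set S, IsClosedIdeal P I → IsClosedIdeal P J → I ⊆ J →
      PairLE P (idealLE P I) P (idealLE P J) := by
    intro I J hI hJ hIJ
    refine ⟨fun a b h => h, hmono I J hIJ, ?_⟩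
    intro a b H x hx
    obtain ⟨c, hLxc, hca⟩ := hx
    obtain ⟨d, hLcd, hdb⟩ := H c ⟨c, hrefl I hI.1.1 c, hca⟩
    exact ⟨d, htrans J hJ.1 hLxc (hmono I J hIJ c d hLcd), hdb⟩
  -- part 3
  have part3 : ∀ I : Set S, IsClosedIdeal P I →
      (Admissible P (idealLE P I) ∧ AddClosed (idealLE P I) ∧
        LeftCont P (idealLE P I) ∧ LeftClosed P (idealLE P I) ∧
        pairIdeal (idealLE P I) = I) := by
    rintro I hI
    obtain ⟨hIi, hIc⟩ := hI
    refine ⟨⟨hrefl I hIi.1, htrans I hIi, hadm3 I hIi⟩, haddc I hIi, hlc I hIi, hlcl I, ?_⟩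
    ext a
    constructor
    · intro h
      apply hIc
      intro x hx
      obtain ⟨y, hyI, hxy⟩ := h x hx
      rw [zero_add] at hxy
      exact hIi.2.2 _ _ hxy hyI
    · intro haI x hx
      exact ⟨a, haI, by simpa using hx⟩
  -- part 4
  have part4 : ∀ L : S → S → Prop,
      Admissible P L → AddClosed L → LeftCont P L → LeftClosed P L →
      (∀ a b, RelComp P L a b → P a b) →
      (IsClosedIdeal P (pairIdeal L) ∧ PairLE P (idealLE P (pairIdeal L)) P L) := by
    intro L hAdm hAC _ hLCl _
    obtain ⟨hLr, hLt, hLa⟩ := hAdm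
    have hPL : ∀ a b, P a b → L a b := by
      intro a b hab
      apply hLa
      rintro x ⟨c, hxc, hca⟩
      exact ⟨c, hxc, hT hca hab⟩
    have hIndL : ∀ a b, IndLE P a b → L a b := by
      intro a b hab
      apply hLa
      rintro x ⟨c, hxc, hca⟩
      exact ⟨c, hxc, hab c hca⟩
    have hId : IsIdeal P (pairIdeal L) := by
      refine ⟨hLr 0, ?_, ?_⟩
      · intro a b ha hb
        have := hAC a 0 b 0 ha hb
        rwa [add_zero] at this
      · intro a b hab hb
        exact hLt (hPL a b hab) hb
    have hClosed : IsClosedIdeal P (pairIdeal L) := by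
      refine ⟨hId, ?_⟩
      intro a H
      have hcomp : RelComp (IndLE P) L a 0 := by
        apply hLCl
        intro c hca
        obtain ⟨e, hce, hea⟩ := hdense c a hca
        exact ⟨e, hce, H e hea⟩
      obtain ⟨m, ham, hm0⟩ := hcomp
      exact hLt (hIndL a m ham) hm0
    have hkey : ∀ a b, idealLE P (pairIdeal L) a b → L a b := by
      intro a b hab
      apply hLa
      rintro x ⟨c, hxc, hca⟩
      obtain ⟨y, hyL, hcy⟩ := hab c hca
      obtain ⟨b', y', hb', hy', hc'⟩ := hW4 c b y hcy
      have hy'0 : L y' 0 := hLt (hPL _ _ hy') hyL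
      have h1 : L (b' + y') b' := by
        have := hAC b' b' y' 0 (hLr b') hy'0
        rwa [add_zero] at this
      exact ⟨b', hLt hxc (hLt (hPL _ _ hc') h1), hb'⟩
    refine ⟨hClosed, fun a b h => h, hkey, ?_⟩
    intro a b H x hx
    obtain ⟨c, hLxc, hca⟩ := hx
    obtain ⟨d, hLcd, hdb⟩ := H c ⟨c, hrefl _ hId.1 c, hca⟩
    exact ⟨d, hLt hLxc (hkey c d hLcd), hdb⟩
  exact ⟨part1, fun L L' _ _ hle a ha => hle.2.1 a 0 ha, part3, part4⟩
end

section
/- Let (X,0,≺) be a W-set and let R be a left ≺-continuous relation on X. For any a, b ∈ X, the following statements are equivalent: (i) a ≤^R b; (ii) for every c with c ≺ a, either c ≺ b or there exist n ≥ 1 and elements d₁,…,d_n and e₁,…,e_n in X such that c ≺ d₁, dᵢ R eᵢ for all i = 1,…,n, eᵢ ≺ d_{i+1} for i = 1,…,n−1, and e_n ≺ b. -/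
universe u v

section S11Aux

variable {X : Type u} (P R : X → X → Prop)

/-- Auxiliary: a chain `c ≺ d₀ R e₀ ≺ d₁ R e₁ ≺ ⋯ R e_{n-1} ≺ b`. -/
def Chain11 (c b : X) : Prop :=
  ∃ n : ℕ, 0 < n ∧ ∃ d e : ℕ → X,
    P c (d 0) ∧ (∀ i, i < n → R (d i) (e i)) ∧
    (∀ i, i + 1 < n → P (e i) (d (i + 1))) ∧ P (e (n - 1)) b

lemma chain11_concat {c b' : X} (n n' : ℕ) (hn : 0 < n) (hn' : 0 < n')
    (d e d' e' : ℕ → X) (h1 : P c (d 0)) (h2 : ∀ i, i < n → R (d i) (e i))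
    (h3 : ∀ i, i + 1 < n → P (e i) (d (i + 1))) (h4 : P (e (n - 1)) (d' 0))
    (h2' : ∀ i, i < n' → R (d' i) (e' i))
    (h3' : ∀ i, i + 1 < n' → P (e' i) (d' (i + 1)))
    (h4' : P (e' (n' - 1)) b') : Chain11 P R c b' := by
  refine ⟨n + n', by omega, (fun i => if i < n then d i else d' (i - n)),
    (fun i => if i < n then e i else e' (i - n)), ?_, ?_, ?_, ?_⟩
  · simpa [hn] using h1
  · intro i hi
    by_cases h : i < n
    · simpa [h] using h2 i h
    · simpa [h] using h2' (i - n) (by omega)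
  · intro i hi
    by_cases h : i + 1 < n
    · have h' : i < n := by omega
      simp only [if_pos h, if_pos h']
      exact h3 i h
    · by_cases h' : i < n
      · have hieq : i = n - 1 := by omega
        subst hieq
        have hd : n - 1 + 1 - n = 0 := by omega
        simp only [if_pos h', if_neg h, hd]
        exact h4
      · have hd : i + 1 - n = (i - n) + 1 := by omega
        simp only [if_neg h, if_neg h', hd]
        exact h3' (i - n) (by omega)
  · have h : ¬ (n + n' - 1 < n) := by omega
    have hd : n + n' - 1 - n = n' - 1 := by omega
    simp only [if_neg h, hd]
    exact h4'

/-- The concrete description is itself a good preorder. -/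
lemma chain11_genGood (z : X) (hW : IsWSet P z) (hRcont : LeftCont P R) :
    GenGood P R (fun a b => ∀ c, P c a → (P c b ∨ Chain11 P R c b)) := by
  obtain ⟨hPtrans, -, hW1⟩ := hW
  refine ⟨?_, ?_, ?_, ?_, ?_⟩
  · intro a c hca; exact Or.inl hca
  · -- transitivity
    intro a b b' hab hbb' c hca
    rcases hab c hca with hcb | ⟨n, hn, d, e, h1, h2, h3, h4⟩
    · exact hbb' c hcb
    · rcases hbb' (e (n - 1)) h4 with henb' | ⟨n', hn', d', e', h1', h2', h3', h4'⟩
      · exact Or.inr ⟨n, hn, d, e, h1, h2, h3, henb'⟩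
      · exact Or.inr (chain11_concat P R n n' hn hn' d e d' e' h1 h2 h3 h1' h2' h3' h4')
  · intro a b hab c hca; exact Or.inl (hab c hca)
  · intro a b hab c hca
    rcases hRcont c b ⟨a, hca, hab⟩ with ⟨d0, hcd, e0, hde, heb⟩
    exact Or.inr ⟨1, one_pos, (fun _ => d0), (fun _ => e0), hcd,
      fun i _ => hde, fun i hi => absurd hi (by omega), heb⟩
  · intro a b hab c hca
    obtain ⟨f, -, hf2, hf3⟩ := hW1 a
    obtain ⟨k, hck⟩ := hf3 c hca
    exact hab (f k) (hf2 k) c hck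

end S11Aux

/-- concrete description of the generated preorder `≤^R` on a W-set. -/
theorem statement11 {X : Type u} (z : X) (P R : X → X → Prop)
    (hW : IsWSet P z) (hRcont : LeftCont P R)
    (L : X → X → Prop) (hL : GenGood P R L)
    (hmin : ∀ L', GenGood P R L' → RelLE L L')
    (a b : X) :
    L a b ↔ ∀ c, P c a → (P c b ∨
      ∃ n : ℕ, 0 < n ∧ ∃ d e : ℕ → X,
        P c (d 0) ∧ (∀ i, i < n → R (d i) (e i)) ∧
        (∀ i, i + 1 < n → P (e i) (d (i + 1))) ∧ P (e (n - 1)) b) := by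
  obtain ⟨hrefl, htrans, hind, hR, hrule⟩ := hL
  have hPtrans : Transitive P := hW.1
  have LofP : ∀ x y : X, P x y → L x y := fun x y hxy =>
    hind x y (fun z hz => hPtrans hz hxy)
  constructor
  · intro hab c hca
    exact hmin _ (chain11_genGood P R z hW hRcont) a b hab c hca
  · intro h
    apply hrule
    intro c hca
    rcases h c hca with hcb | ⟨n, hn, d, e, h1, h2, h3, h4⟩
    · exact LofP c b hcb
    · have key : ∀ i, i < n → L c (e i) := by
        intro i; induction i with
        | zero => intro hi; exact htrans (LofP c (d 0) h1) (hR _ _ (h2 0 hn))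
        | succ i ih =>
          intro hi
          exact htrans (htrans (ih (by omega)) (LofP _ _ (h3 i hi)))
            (hR _ _ (h2 (i + 1) hi))
      exact htrans (key (n - 1) (by omega)) (LofP _ _ h4)
end

section
/- Let (X,0,≺) be a W-set and let R be a left ≺-continuous relation on X. Then the pair α^R = (≺, ≤^R) is the smallest ≺-prenormal left ≺-closed admissible pair containing R; that is: α^R is an admissible pair with ≤^R left ≺-continuous and left ≺-closed, R ⊆ ≤^R, and for every admissible ≺-prenormal left ≺-closed pair (≼,≤) with R ⊆ ≤ one has α^R ≤ (≼,≤) in the order on admissible pairs. Furthermore, setting ≺^R := ≤^R ∘ ≺ ∘ ≤^R, the quadruple (X,0,≺^R,≤^R) satisfies axiom (W2): for every a ∈ X and every c with b ≤^R c for all b ≺^R a, one has a ≤^R c. -/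
universe u v

/-- `α^R = (≺, ≤^R)` is the smallest ≺-prenormal left ≺-closed admissible pair
containing `R`, and `(X, 0, ≺^R, ≤^R)` satisfies axiom (W2). -/
theorem statement12 {X : Type u} (z : X) (P R : X → X → Prop)
    (hW : IsWSet P z) (hRcont : LeftCont P R)
    (L : X → X → Prop) (hL : GenGood P R L)
    (hmin : ∀ L', GenGood P R L' → RelLE L L') :
    (Admissible P L ∧ LeftCont P L ∧ LeftClosed P L ∧ RelLE R L ∧
      ∀ Q L' : X → X → Prop, Admissible Q L' → Prenormal P Q → LeftCont P L' →
        LeftClosed P L' → RelLE R L' → PairLE P L Q L') ∧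
    AxiomW2 (RelComp L (RelComp P L)) L := by
  obtain ⟨hPtrans, hz, hW1⟩ := hW
  obtain ⟨hLrefl, hLtrans, hInd, hRL, hC⟩ := hL
  -- density of P from (W1)
  have hdense : ∀ a b, P a b → ∃ c, P a c ∧ P c b := by
    intro a b hab
    obtain ⟨f, hf1, hf2, hf3⟩ := hW1 b
    obtain ⟨k, hk⟩ := hf3 a hab
    exact ⟨f k, hk, hf2 k⟩
  have hPL : ∀ a b, P a b → L a b := by
    intro a b hab
    exact hInd a b (fun x hx => hPtrans hx hab)
  -- left continuity of L via an auxiliary generated relation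
  have hcont : ∀ a b, L a b → ∀ x, P x a → ∃ c d, P x c ∧ L c d ∧ P d b := by
    have hgood : GenGood P R
        (fun a b => L a b ∧ ∀ x, P x a → ∃ c d, P x c ∧ L c d ∧ P d b) := by
      refine ⟨?_, ?_, ?_, ?_, ?_⟩
      · intro a
        refine ⟨hLrefl a, fun x hx => ?_⟩
        obtain ⟨c, h1, h2⟩ := hdense x a hx
        exact ⟨c, c, h1, hLrefl c, h2⟩
      · rintro a b c ⟨hab, Hab⟩ ⟨hbc, Hbc⟩
        refine ⟨hLtrans hab hbc, fun x hx => ?_⟩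
        obtain ⟨c1, d1, h1, h2, h3⟩ := Hab x hx
        obtain ⟨c2, d2, h4, h5, h6⟩ := Hbc d1 h3
        exact ⟨c1, d2, h1, hLtrans h2 (hLtrans (hPL _ _ h4) h5), h6⟩
      · intro a b hab
        refine ⟨hInd a b hab, fun x hx => ?_⟩
        obtain ⟨c, h1, h2⟩ := hdense x b (hab x hx)
        exact ⟨c, c, h1, hLrefl c, h2⟩
      · intro a b hab
        refine ⟨hRL a b hab, fun x hx => ?_⟩
        obtain ⟨c, h1, d, h2, h3⟩ := hRcont x b ⟨a, hx, hab⟩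
        exact ⟨c, d, h1, hRL _ _ h2, h3⟩
      · intro a b h
        refine ⟨hC a b (fun c hc => (h c hc).1), fun x hx => ?_⟩
        obtain ⟨c, h1, h2⟩ := hdense x a hx
        exact (h c h2).2 x h1
    intro a b hab x hx
    exact ((hmin _ hgood) a b hab).2 x hx
  refine ⟨⟨⟨hLrefl, hLtrans, ?_⟩, ?_, ?_, hRL, ?_⟩, ?_⟩
  · -- Admissible
    intro a b h
    apply hC
    intro c hc
    obtain ⟨e, h1, h2⟩ := h c ⟨c, hLrefl c, hc⟩
    exact hLtrans h1 (hPL e b h2)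
  · -- LeftCont
    rintro a b ⟨c, hac, hcb⟩
    obtain ⟨c', d, h1, h2, h3⟩ := hcont c b hcb a hac
    exact ⟨c', h1, d, h2, h3⟩
  · -- LeftClosed
    intro a b h
    refine ⟨a, fun x hx => hx, hC a b ?_⟩
    intro c hc
    obtain ⟨d, h1, h2⟩ := h c hc
    exact hLtrans (hPL c d h1) h2
  · -- minimality
    intro Q L' hAdm hPre hCont' hClosed' hRL'
    obtain ⟨hQtrans, hPQ, hQiff⟩ := hPre
    obtain ⟨hrefl', htrans', hadm'⟩ := hAdm
    have hQL' : ∀ a b, Q a b → L' a b := by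
      intro a b hab
      refine hadm' a b ?_
      rintro x ⟨c, h1, h2⟩
      exact ⟨c, h1, hQtrans h2 hab⟩
    have hgood' : GenGood P R L' := by
      refine ⟨hrefl', htrans', ?_, hRL', ?_⟩
      · intro a b hab
        refine hadm' a b ?_
        rintro x ⟨c, hxc, hca⟩
        obtain ⟨d, hcd, hda⟩ := (hQiff c a).1 hca
        exact ⟨c, hxc, (hQiff c b).2 ⟨d, hcd, hab d hda⟩⟩
      · intro a b h
        refine hadm' a b ?_
        rintro x ⟨c, hxc, hca⟩
        obtain ⟨d, hcd, hda⟩ := (hQiff c a).1 hca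
        obtain ⟨e, hce, hed⟩ := (hQiff c d).1 hcd
        obtain ⟨u, heu, v, huv, hvb⟩ := hCont' e b ⟨d, hed, h d hda⟩
        exact ⟨v, htrans' (htrans' hxc (hQL' c e hce))
          (htrans' (hQL' e u (hPQ e u heu)) huv), hPQ v b hvb⟩
    have hLL' : RelLE L L' := hmin L' hgood'
    refine ⟨hPQ, hLL', ?_⟩
    rintro a b H x ⟨c, hxc, hca⟩
    obtain ⟨d, hcd, hda⟩ := (hQiff c a).1 hca
    obtain ⟨e, hde, heb⟩ := H d ⟨d, hLrefl d, hda⟩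
    exact ⟨e, htrans' hxc (htrans' (hQL' c d hcd) (hLL' d e hde)), hPQ e b heb⟩
  · -- AxiomW2
    intro a c h
    apply hC
    intro b hb
    exact h b ⟨b, hLrefl b, a, hb, hLrefl a⟩
end

section
/- Let (X,0,≺) be a W-set and let R and R' be left ≺-continuous relations on X. Let ≤^{R,R'} be the smallest preorder ≤ on X such that: (a) a^{≺^R} ⊆ b^{≺^R} implies a ≤ b; (b) a R' b implies a ≤ b; (c) if c ≤ b for every c with c ≺^R a, then a ≤ b; and set ≺^{R,R'} := ≤^{R,R'} ∘ ≺^R ∘ ≤^{R,R'}. Then ≤^{R,R'} coincides with ≤^{R ∪ R'} and ≺^{R,R'} coincides with ≺^{R ∪ R'}. -/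
universe u v

/-- repeated generation of prenormal pairs contracts to a single generation:
`≤^{R,R'} = ≤^{R ∪ R'}` and `≺^{R,R'} = ≺^{R ∪ R'}`. -/
theorem statement13 {X : Type u} (z : X) (P R R' : X → X → Prop)
    (hW : IsWSet P z) (hR : LeftCont P R) (hR' : LeftCont P R')
    (LR : X → X → Prop) (hLR : GenGood P R LR)
    (hLRmin : ∀ L', GenGood P R L' → RelLE LR L')
    (LRR' : X → X → Prop)
    (hLRR' : GenGood (RelComp LR (RelComp P LR)) R' LRR')
    (hLRR'min : ∀ L', GenGood (RelComp LR (RelComp P LR)) R' L' → RelLE LRR' L')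
    (LU : X → X → Prop) (hLU : GenGood P (fun a b => R a b ∨ R' a b) LU)
    (hLUmin : ∀ L', GenGood P (fun a b => R a b ∨ R' a b) L' → RelLE LU L') :
    (∀ a b, LRR' a b ↔ LU a b) ∧
    (∀ a b, RelComp LRR' (RelComp (RelComp LR (RelComp P LR)) LRR') a b ↔
      RelComp LU (RelComp P LU) a b) := by
  obtain ⟨hPtrans, hz, hW1⟩ := hW
  obtain ⟨hLRrefl, hLRtrans, hLRind, hLRR, hLRw2⟩ := hLR
  obtain ⟨hQrefl, hQtrans, hQind, hQR, hQw2⟩ := hLRR'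
  obtain ⟨hUrefl, hUtrans, hUind, hUR, hUw2⟩ := hLU
  -- LR ⊆ LU
  have hLRLU : RelLE LR LU :=
    hLRmin LU ⟨hUrefl, hUtrans, hUind, fun a b h => hUR a b (Or.inl h), hUw2⟩
  -- Key lemma: if LR a b and P u a, then ∃ w, LR u w ∧ P w b
  have lemA : ∀ a b, LR a b → ∀ u, P u a → ∃ w, LR u w ∧ P w b := by
    have hgood : GenGood P R (fun a b => LR a b ∧ ∀ u, P u a → ∃ w, LR u w ∧ P w b) := by
      refine ⟨?_, ?_, ?_, ?_, ?_⟩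
      · intro a
        exact ⟨hLRrefl a, fun u hu => ⟨u, hLRrefl u, hu⟩⟩
      · rintro a b c ⟨hab, ha⟩ ⟨hbc, hb⟩
        refine ⟨hLRtrans hab hbc, fun u hu => ?_⟩
        obtain ⟨w, huw, hwb⟩ := ha u hu
        obtain ⟨w', hww', hw'c⟩ := hb w hwb
        exact ⟨w', hLRtrans huw hww', hw'c⟩
      · intro a b h
        refine ⟨hLRind a b h, fun u hu => ⟨u, hLRrefl u, h u hu⟩⟩
      · intro a b h
        refine ⟨hLRR a b h, fun u hu => ?_⟩
        obtain ⟨c, huc, d, hcd, hdb⟩ := hR u b ⟨a, hu, h⟩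
        exact ⟨d, hLRtrans (hLRind u c (fun x hx => hPtrans hx huc)) (hLRR c d hcd), hdb⟩
      · intro a b H
        refine ⟨hLRw2 a b (fun c hc => (H c hc).1), fun u hu => ?_⟩
        obtain ⟨f, hf1, hf2, hf3⟩ := hW1 a
        obtain ⟨k, huk⟩ := hf3 u hu
        exact (H (f k) (hf2 k)).2 u huk
    exact fun a b hab u hu => ((hLRmin _ hgood) a b hab).2 u hu
  -- LR ⊆ LRR'
  have hLRQ : RelLE LR LRR' := by
    intro a b hab
    refine hQind a b ?_
    rintro x ⟨u, hxu, v, huv, hva⟩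
    exact ⟨u, hxu, v, huv, hLRtrans hva hab⟩
  -- LRR' ⊆ LU
  have hQU : RelLE LRR' LU := by
    refine hLRR'min LU ⟨hUrefl, hUtrans, ?_, fun a b h => hUR a b (Or.inr h), ?_⟩
    · intro a b h
      refine hUw2 a b (fun c hc => ?_)
      obtain ⟨u, hcu, v, huv, hva⟩ := h c ⟨c, hLRrefl c, a, hc, hLRrefl a⟩
      exact hUtrans (hLRLU c u hcu)
        (hUtrans (hUind u v (fun x hx => hPtrans hx huv)) (hLRLU v b hva))
    · intro a b h
      exact hUw2 a b (fun c hc => h c ⟨c, hLRrefl c, a, hc, hLRrefl a⟩)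
  -- LU ⊆ LRR'
  have hUQ : RelLE LU LRR' := by
    refine hLUmin LRR' ⟨hQrefl, hQtrans, ?_, ?_, ?_⟩
    · intro a b h
      refine hQind a b ?_
      rintro x ⟨u, hxu, v, huv, hva⟩
      exact ⟨u, hxu, v, huv, hLRtrans hva (hLRind a b h)⟩
    · rintro a b (h | h)
      · exact hLRQ a b (hLRR a b h)
      · exact hQR a b h
    · intro a b H
      refine hQw2 a b ?_
      rintro c ⟨u, hcu, v, huv, hva⟩
      obtain ⟨w, huw, hwa⟩ := lemA v a hva u huv
      exact hQtrans (hLRQ c u hcu) (hQtrans (hLRQ u w huw) (H w hwa))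
  have hiff : ∀ a b, LRR' a b ↔ LU a b := fun a b => ⟨hQU a b, hUQ a b⟩
  refine ⟨hiff, fun a b => ⟨?_, ?_⟩⟩
  · rintro ⟨c, hac, d, ⟨u, hcu, v, huv, hvd⟩, hdb⟩
    exact ⟨u, hUtrans (hQU a c hac) (hLRLU c u hcu), v, huv,
      hUtrans (hLRLU v d hvd) (hQU d b hdb)⟩
  · rintro ⟨c, hac, d, hcd, hdb⟩
    exact ⟨c, hUQ a c hac, d, ⟨c, hLRrefl c, d, hcd, hLRrefl d⟩, hUQ d b hdb⟩
end

section
/- Let (X,0,≺) be a W-set and let R be a left ≺-continuous relation on X that is ≺-almost transitive. Then for any a,b ∈ X the following are equivalent: (i) a ≤^R b; (ii) for every c with c ≺ a, either c ≺ b or (c,b) ∈ ≺ ∘ R ∘ ≺. Moreover, if in addition the identity relation is contained in R, then (i) is equivalent to: for every c ≺ a one has (c,b) ∈ ≺ ∘ R ∘ ≺. -/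
universe u v

/-- one-step description of `≤^R` for a ≺-almost transitive relation `R`. -/
theorem statement14 {X : Type u} (z : X) (P R : X → X → Prop)
    (hW : IsWSet P z) (hRcont : LeftCont P R)
    (hRat : AlmostTransitive P R)
    (L : X → X → Prop) (hL : GenGood P R L)
    (hmin : ∀ L', GenGood P R L' → RelLE L L') :
    (∀ a b, L a b ↔ ∀ c, P c a → (P c b ∨ RelComp P (RelComp R P) c b)) ∧
    ((∀ x, R x x) →
      ∀ a b, L a b ↔ ∀ c, P c a → RelComp P (RelComp R P) c b) := by
  obtain ⟨hPtrans, hz, hW1⟩ := hW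
  set L' : X → X → Prop := fun a b => ∀ c, P c a → (P c b ∨ RelComp P (RelComp R P) c b)
    with hL'def
  have hgood : GenGood P R L' := by
    refine ⟨?_, ?_, ?_, ?_, ?_⟩
    · intro a c hc; exact Or.inl hc
    · intro a b c hab hbc d hda
      rcases hab d hda with h | ⟨e, hde, f, hef, hfb⟩
      · exact hbc d h
      · rcases hbc f hfb with h | ⟨g, hfg, h2, hgh, hhc⟩
        · exact Or.inr ⟨e, hde, f, hef, h⟩
        · exact Or.inr (hRat d c ⟨e, hde, f, hef, g, hfg, h2, hgh, hhc⟩)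
    · intro a b h c hca; exact Or.inl (h c hca)
    · intro a b hab c hca
      exact Or.inr (hRcont c b ⟨a, hca, hab⟩)
    · intro a b h c hca
      obtain ⟨f, hf1, hf2, hf3⟩ := hW1 a
      obtain ⟨k, hk⟩ := hf3 c hca
      exact h (f (k+1)) (hf2 (k+1)) c (hPtrans hk (hf1 k))
  have hLL' : RelLE L L' := hmin L' hgood
  have hL'L : ∀ a b, L' a b → L a b := by
    intro a b hab
    obtain ⟨hrefl, htrans, hind, hR, hlim⟩ := hL
    apply hlim
    intro c hca
    rcases hab c hca with h | ⟨d, hcd, e, hde, heb⟩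
    · exact hind c b (fun x hx => hPtrans hx h)
    · exact htrans (hind c d fun x hx => hPtrans hx hcd)
        (htrans (hR d e hde) (hind e b fun x hx => hPtrans hx heb))
  have part1 : ∀ a b, L a b ↔ ∀ c, P c a → (P c b ∨ RelComp P (RelComp R P) c b) :=
    fun a b => ⟨fun h => hLL' a b h, fun h => hL'L a b h⟩
  refine ⟨part1, ?_⟩
  intro hid a b
  rw [part1]
  constructor
  · intro h c hca
    rcases h c hca with hcb | h2
    · obtain ⟨f, hf1, hf2, hf3⟩ := hW1 b
      obtain ⟨k, hk⟩ := hf3 c hcb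
      exact ⟨f k, hk, f k, hid (f k), hf2 k⟩
    · exact h2
  · intro h c hca; exact Or.inr (h c hca)
end

section
/- Let A be a C*-algebra. The Cuntz subequivalence ≼_Cu is the smallest preorder ≤ on the positive cone A₊ such that for all a,b ∈ A₊, each of the following conditions implies a ≤ b: (i) a ∈ her(b), where her(b) is the hereditary C*-subalgebra generated by b; (ii) there exists x ∈ A such that a = x b x*; (iii) c ≤ b holds for every c ∈ A₊ for which there exists ε > 0 with c ∈ her((a − ε)₊). -/
/-!
Writing `a ≼ b` as `a ∈ closure {x b x⋆ | x}` makes transitivity and (ii) immediate, and (iii)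
follows from `(a - ε)₊ → a`. For (i), `a = √a⋆ √a` with `√a ∈ her b` a limit of elements `b x b`,
and `(b x b)⋆ (b x b) = y b y⋆` for `y = b x⋆ √b`.

For minimality, let `L` satisfy (i)–(iii) and `‖a - x b x⋆‖ < ε / 2`. With `r = (a - ε)₊ ^ (1/2)`
one has `(ε / 2) (a - ε)₊ ≤ r x b x⋆ r`, so everything in `her ((a - ε)₊)` lies in the hereditary
subalgebra of `(r x) b (r x)⋆` and is `L`-below `b` by (i), (ii) and transitivity; (iii) then
gives `L a b`. Both directions rest on `0 ≤ k ≤ h → k ∈ her h`, proved by approximating `k` by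
`p k p` with `p = g(h)` a functional-calculus approximate unit for `h`.
-/

variable {A : Type*} [NonUnitalCStarAlgebra A] [PartialOrder A] [StarOrderedRing A]

/-- The hereditary C*-subalgebra generated by `b`, as a set: the norm-closure of `b * A * b`. -/
def her (b : A) : Set A := closure {y : A | ∃ x : A, y = b * x * b}

/-- The cut-down `(a - ε)₊`, via the nonunital continuous functional calculus. -/
noncomputable def cutdown (a : A) (ε : ℝ) : A := cfcₙ (fun t : ℝ => max (t - ε) 0) a

/-- Cuntz subequivalence: `a ≼_Cu b` iff for every `ε > 0` there is `x` with
`‖a - x * b * x*‖ < ε`. -/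
def CuntzLE (a b : A) : Prop := ∀ ε : ℝ, 0 < ε → ∃ x : A, ‖a - x * b * star x‖ < ε

/-- A preorder on the positive cone satisfying the three generating conditions:
(i) `a ∈ her b` implies `a ≤ b`; (ii) `a = x b x*` implies `a ≤ b`;
(iii) if `c ≤ b` for every positive `c` lying in `her ((a - ε)₊)` for some `ε > 0`,
then `a ≤ b`. -/
def CuGood (L : {a : A // 0 ≤ a} → {a : A // 0 ≤ a} → Prop) : Prop :=
  Reflexive L ∧ Transitive L ∧
  (∀ a b : {a : A // 0 ≤ a}, (a : A) ∈ her (b : A) → L a b) ∧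
  (∀ a b : {a : A // 0 ≤ a}, (∃ x : A, (a : A) = x * (b : A) * star x) → L a b) ∧
  (∀ a b : {a : A // 0 ≤ a},
    (∀ c : {a : A // 0 ≤ a},
      (∃ ε : ℝ, 0 < ε ∧ (c : A) ∈ her (cutdown (a : A) ε)) → L c b) → L a b)

section

variable {B : Type*} [NonUnitalCStarAlgebra B]

lemma mul_mul_mem_her {b u v : B} (hu : u ∈ her b) (hv : v ∈ her b) (y : B) :
    u * y * v ∈ her b := by
  refine map_mem_closure₂ (f := fun p q : B => p * y * q) (by fun_prop) hu hv ?_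
  rintro _ ⟨x, rfl⟩ _ ⟨z, rfl⟩
  exact ⟨x * b * y * b * z, by simp only [mul_assoc]⟩

lemma her_subset_of_mem {a b : B} (h : a ∈ her b) : her a ⊆ her b :=
  closure_minimal (by rintro _ ⟨x, rfl⟩; exact mul_mul_mem_her h h x) isClosed_closure

lemma smul_mem_her {b z : B} (c : ℝ) (hz : z ∈ her b) : c • z ∈ her b := by
  refine map_mem_closure (continuous_const_smul c) hz ?_
  rintro _ ⟨x, rfl⟩
  exact ⟨c • x, by rw [mul_smul_comm, smul_mul_assoc]⟩

lemma exists_cfcₙ_mul_mul_cfcₙ_eq {q : ℝ → ℝ} (hq : Continuous q) (hq0 : q 0 = 0) {h : B}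
    (hh : IsSelfAdjoint h) (x : B) :
    ∃ y, cfcₙ (fun t => t * q t) h * x * cfcₙ (fun t => t * q t) h = h * y * h := by
  refine ⟨cfcₙ q h * x * cfcₙ q h, ?_⟩
  nth_rw 1 [cfcₙ_mul _ _ h (by fun_prop) (by simp) (by fun_prop) hq0]
  simp_rw [mul_comm _ (q _)]
  rw [cfcₙ_mul _ _ h (by fun_prop) hq0 (by fun_prop) (by simp), cfcₙ_id' ℝ h]
  simp only [mul_assoc]

/-- The element `(1 - p) * z * (1 - p)` of the unitization, expanded so that it lies in `B`. -/
def complConj (p z : B) : B := z - p * z - z * p + p * z * p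

lemma complConj_cfcₙ {g : ℝ → ℝ} (hg : Continuous g) (hg0 : g 0 = 0) {h : B}
    (hh : IsSelfAdjoint h) :
    complConj (cfcₙ g h) h = cfcₙ (fun t => (1 - g t) ^ 2 * t) h := by
  have e : (fun t => (1 - g t) ^ 2 * t) =
      fun t => (t - g t * t - t * g t) + g t * t * g t := by funext t; ring
  rw [e, complConj, cfcₙ_add _ _ h (by fun_prop) (by simp [hg0]) (by fun_prop) (by simp [hg0]),
    cfcₙ_sub _ _ h (by fun_prop) (by simp [hg0]) (by fun_prop) (by simp [hg0]),
    cfcₙ_sub _ _ h (by fun_prop) (by simp) (by fun_prop) (by simp [hg0]),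
    cfcₙ_mul (fun t => g t * t) g h (by fun_prop) (by simp [hg0]) (by fun_prop) hg0,
    cfcₙ_mul g (fun t => t) h (by fun_prop) hg0 (by fun_prop) (by simp),
    cfcₙ_mul (fun t => t) g h (by fun_prop) (by simp) (by fun_prop) hg0, cfcₙ_id' ℝ h]

lemma cuntzLE_iff_mem_closure {a b : B} :
    CuntzLE a b ↔ a ∈ closure (Set.range fun x : B => x * b * star x) := by
  simp only [CuntzLE, Metric.mem_closure_iff, Set.exists_range_iff, dist_eq_norm]

lemma cuntzLE_conj (x b : B) : CuntzLE (x * b * star x) b :=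
  cuntzLE_iff_mem_closure.mpr (subset_closure ⟨x, rfl⟩)

lemma CuntzLE.trans {a b c : B} (hab : CuntzLE a b) (hbc : CuntzLE b c) : CuntzLE a c := by
  rw [cuntzLE_iff_mem_closure] at *
  refine closure_minimal ?_ isClosed_closure hab
  rintro _ ⟨x, rfl⟩
  refine map_mem_closure (f := fun d => x * d * star x) (by fun_prop) hbc ?_
  rintro _ ⟨y, rfl⟩
  exact ⟨x * y, by simp only [star_mul, mul_assoc]⟩

end

lemma complConj_nonneg {p z : A} (hp : IsSelfAdjoint p) (hz : 0 ≤ z) : 0 ≤ complConj p z := by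
  obtain ⟨s, rfl⟩ := CStarAlgebra.nonneg_iff_eq_star_mul_self.mp hz
  have : complConj p (star s * s) = star (s - s * p) * (s - s * p) := by
    rw [complConj, star_sub, star_mul, hp.star_eq]; noncomm_ring
  exact this ▸ star_mul_self_nonneg _

lemma complConj_mono {p z₁ z₂ : A} (hp : IsSelfAdjoint p) (hz : z₁ ≤ z₂) :
    complConj p z₁ ≤ complConj p z₂ := by
  have : complConj p z₂ - complConj p z₁ = complConj p (z₂ - z₁) := by
    simp only [complConj]; noncomm_ring
  exact sub_nonneg.mp (this ▸ complConj_nonneg hp (sub_nonneg.mpr hz))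

lemma norm_sub_mul_mul_sq_le {p k h : A} (hp : IsSelfAdjoint p) (hp1 : ‖p‖ ≤ 1) (hk : 0 ≤ k)
    (hkh : k ≤ h) : ‖k - p * k * p‖ ^ 2 ≤ 4 * (‖k‖ * ‖complConj p h‖) := by
  set r := CFC.sqrt k
  have hr : IsSelfAdjoint r := .of_nonneg (CFC.sqrt_nonneg k)
  have hrr : r * r = k := CFC.sqrt_mul_sqrt_self k
  set w := k - k * p
  -- `w = r * v` with `v = r * (1 - p)`, so `w⋆ w = v⋆ k v ≤ ‖k‖ v⋆ v = ‖k‖ (1 - p) k (1 - p)`.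
  have hww : star w * w ≤ ‖k‖ • complConj p h := by
    set v := r - r * p
    have hw : star w * w = star v * k * v := by
      simp only [w, v, star_sub, star_mul, hr.star_eq, hp.star_eq, ← hrr]
      noncomm_ring
    have hv : star v * v = complConj p k := by
      simp only [v, complConj, star_sub, star_mul, hr.star_eq, hp.star_eq, ← hrr]
      noncomm_ring
    calc star w * w ≤ ‖k‖ • (star v * v) := hw ▸ CStarAlgebra.star_left_conjugate_le_norm_smul
      _ ≤ ‖k‖ • complConj p h := hv ▸ smul_le_smul_of_nonneg_left (complConj_mono hp hkh)
          (norm_nonneg k)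
  have hw_sq : ‖w‖ ^ 2 ≤ ‖k‖ * ‖complConj p h‖ := by
    calc ‖w‖ ^ 2 = ‖star w * w‖ := by rw [CStarRing.norm_star_mul_self, sq]
      _ ≤ ‖‖k‖ • complConj p h‖ :=
          CStarAlgebra.norm_le_norm_of_nonneg_of_le (star_mul_self_nonneg w) hww
      _ = ‖k‖ * ‖complConj p h‖ := by rw [norm_smul, norm_norm]
  have hsub : ‖k - p * k * p‖ ≤ 2 * ‖w‖ := by
    have e : k - p * k * p = w + star w * p := by
      simp only [w, star_sub, star_mul, hp.star_eq, hk.isSelfAdjoint.star_eq]; noncomm_ring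
    calc ‖k - p * k * p‖ ≤ ‖w‖ + ‖star w‖ * ‖p‖ := e ▸ norm_add_le_of_le le_rfl (norm_mul_le _ _)
      _ ≤ 2 * ‖w‖ := by rw [norm_star]; nlinarith [norm_nonneg w]
  nlinarith [norm_nonneg (k - p * k * p), norm_nonneg w]

lemma exists_norm_complConj_le {h : A} (hh : 0 ≤ h) {s : ℝ} (hs : 0 < s) :
    ∃ p, IsSelfAdjoint p ∧ ‖p‖ ≤ 1 ∧ ‖complConj p h‖ ≤ 1 / (2 * s) ∧
      ∀ x, ∃ y, p * x * p = h * y * h := by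
  have hden : ∀ t : ℝ, 0 < s ^ 2 * t ^ 2 + 1 := fun t => by positivity
  -- `p = g(h)` with `g t = s²t² / (s²t² + 1)`: `g ≤ 1`, and `(1 - g t)² t ≤ 1 / 2s` for `t ≥ 0`.
  set q : ℝ → ℝ := fun t => s ^ 2 * t / (s ^ 2 * t ^ 2 + 1)
  have hq : Continuous q := by fun_prop (disch := exact fun t => (hden t).ne')
  refine ⟨cfcₙ (fun t => t * q t) h, cfcₙ_predicate _ h, ?_, ?_,
    exists_cfcₙ_mul_mul_cfcₙ_eq hq (by simp [q]) hh.isSelfAdjoint⟩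
  · refine norm_cfcₙ_le fun t _ => ?_
    rw [Real.norm_eq_abs, abs_le]
    constructor
    · have : 0 ≤ t * q t := by
        simp only [q, ← mul_div_assoc]
        exact div_nonneg (by nlinarith [sq_nonneg (s * t)]) (hden t).le
      linarith
    · simp only [q, ← mul_div_assoc]
      rw [div_le_one (hden t)]; nlinarith
  · rw [complConj_cfcₙ (by fun_prop) (by simp [q]) hh.isSelfAdjoint]
    refine norm_cfcₙ_le fun t ht => ?_
    have ht0 : 0 ≤ t := quasispectrum_nonneg_of_nonneg h hh t ht
    have e : (1 - t * q t) ^ 2 * t = t / (s ^ 2 * t ^ 2 + 1) ^ 2 := by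
      simp only [q]; field_simp; ring
    rw [e, Real.norm_eq_abs, abs_of_nonneg (by positivity),
      div_le_div_iff₀ (by positivity) (by positivity)]
    nlinarith [sq_nonneg (s * t - 1), sq_nonneg (s * t), hden t]

lemma mem_her_of_le {k h : A} (hk : 0 ≤ k) (hkh : k ≤ h) : k ∈ her h := by
  rw [her, Metric.mem_closure_iff]
  intro δ hδ
  set s : ℝ := 2 * ‖k‖ / δ ^ 2 + 1
  have hs : 0 < s := by positivity
  obtain ⟨p, hp, hp1, hph, hpkp⟩ := exists_norm_complConj_le (hk.trans hkh) hs
  obtain ⟨y, hy⟩ := hpkp k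
  refine ⟨p * k * p, ⟨y, hy⟩, ?_⟩
  have hsδ : 4 * (‖k‖ * (1 / (2 * s))) < δ ^ 2 := by
    have : s * δ ^ 2 = 2 * ‖k‖ + δ ^ 2 := by simp only [s]; field_simp
    rw [show 4 * (‖k‖ * (1 / (2 * s))) = 2 * ‖k‖ / s by field_simp; ring, div_lt_iff₀ hs]
    nlinarith
  have := norm_sub_mul_mul_sq_le hp hp1 hk hkh
  have := mul_le_mul_of_nonneg_left hph (norm_nonneg k)
  rw [dist_eq_norm]
  nlinarith [norm_nonneg (k - p * k * p)]

lemma cutdown_nonneg (a : A) (ε : ℝ) : 0 ≤ cutdown a ε :=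
  cfcₙ_nonneg fun _ _ => le_max_right _ _

lemma cutdown_anti (a : A) {δ ε : ℝ} (hδ : 0 ≤ δ) (hδε : δ ≤ ε) : cutdown a ε ≤ cutdown a δ :=
  cfcₙ_mono (fun _ _ => max_le_max (by linarith) le_rfl) (hf0 := by simp [hδ.trans hδε])
    (hg0 := by simp [hδ])

lemma norm_sub_cutdown_le {a : A} (ha : 0 ≤ a) {ε : ℝ} (hε : 0 ≤ ε) : ‖a - cutdown a ε‖ ≤ ε := by
  nth_rw 1 [cutdown, ← cfcₙ_id' ℝ a]
  rw [← cfcₙ_sub _ _ a (by fun_prop) (by simp) (by fun_prop) (by simp [hε])]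
  refine norm_cfcₙ_le fun t ht => ?_
  have ht0 : 0 ≤ t := quasispectrum_nonneg_of_nonneg a ha t ht
  rw [Real.norm_eq_abs, abs_le]
  constructor <;> cases max_cases (t - ε) 0 <;> linarith

lemma mem_closure_of_forall_cutdown_mem {a : A} {S : Set A} (ha : 0 ≤ a)
    (h : ∀ ε > 0, cutdown a ε ∈ closure S) : a ∈ closure S := by
  rw [← closure_closure, Metric.mem_closure_iff]
  intro δ hδ
  refine ⟨cutdown a (δ / 2), h _ (by positivity), ?_⟩
  rw [dist_eq_norm]
  linarith [norm_sub_cutdown_le ha (ε := δ / 2) (by positivity)]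

lemma mem_her_of_smul_le {k h : A} {c : ℝ} (hc : 0 < c) (hk : 0 ≤ k) (hkh : c • k ≤ h) :
    k ∈ her h := by
  simpa [smul_smul, hc.ne'] using smul_mem_her c⁻¹ (mem_her_of_le (smul_nonneg hc.le hk) hkh)

lemma sqrt_mem_her {a : A} (ha : 0 ≤ a) : CFC.sqrt a ∈ her a := by
  refine mem_closure_of_forall_cutdown_mem (CFC.sqrt_nonneg a) fun ε hε =>
    mem_her_of_smul_le hε (cutdown_nonneg _ _) ?_
  rw [CFC.sqrt_eq_real_sqrt a, cutdown,
    ← cfcₙ_comp' _ _ a (by fun_prop) (by simp [hε.le]) (by fun_prop) (by simp),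
    ← cfcₙ_const_mul _ _ a (by fun_prop) (by simp [hε.le])]
  nth_rw 2 [← cfcₙ_id' ℝ a]
  refine cfcₙ_mono (fun t ht => ?_) (hf0 := by simp [hε.le])
  have ht0 : 0 ≤ t := quasispectrum_nonneg_of_nonneg a ha t ht
  rcases le_total (√t) ε with h | h
  · simp [h, ht0]
  · rw [max_eq_left (by linarith)]
    nlinarith [Real.mul_self_sqrt ht0, Real.sqrt_nonneg t]

lemma cuntzLE_of_mem_her {a b : A} (ha : 0 ≤ a) (hb : 0 ≤ b) (hab : a ∈ her b) :
    CuntzLE a b := by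
  have hsa : star (CFC.sqrt a) * CFC.sqrt a = a := by
    rw [(CFC.sqrt_nonneg a).isSelfAdjoint.star_eq, CFC.sqrt_mul_sqrt_self a]
  set t := CFC.sqrt b
  have ht : IsSelfAdjoint t := (CFC.sqrt_nonneg b).isSelfAdjoint
  have htt : t * t = b := CFC.sqrt_mul_sqrt_self b
  have htbt (z : A) : t * (b * (t * z)) = b * (b * z) := by
    simp only [← htt, mul_assoc]
  rw [cuntzLE_iff_mem_closure, ← hsa]
  refine map_mem_closure (f := fun z => star z * z) (by fun_prop)
    (her_subset_of_mem hab (sqrt_mem_her ha)) ?_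
  rintro _ ⟨x, rfl⟩
  refine ⟨b * star x * t, ?_⟩
  simp only [star_mul, star_star, hb.isSelfAdjoint.star_eq, ht.star_eq, mul_assoc, htbt]

lemma cuntzLE_refl {a : A} (ha : 0 ≤ a) : CuntzLE a a :=
  cuntzLE_of_mem_her ha ha (mem_her_of_le ha le_rfl)

lemma cuntzLE_of_forall_cutdown {a b : A} (ha : 0 ≤ a) (h : ∀ ε > 0, CuntzLE (cutdown a ε) b) :
    CuntzLE a b := by
  simp only [cuntzLE_iff_mem_closure] at *
  exact mem_closure_of_forall_cutdown_mem ha h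

lemma exists_smul_cutdown_le_conj {a d : A} (ha : IsSelfAdjoint a) (hd : IsSelfAdjoint d)
    {ε η : ℝ} (hε : 0 ≤ ε) (hda : ‖d - a‖ ≤ η) :
    ∃ r, (ε - η) • cutdown a ε ≤ r * d * star r := by
  set r := cfcₙ (fun t => √(max (t - ε) 0)) a
  have hr0 : √(max (0 - ε) 0) = 0 := by simp [hε]
  have hr : IsSelfAdjoint r := cfcₙ_predicate _ a
  have hrr : r * r = cutdown a ε := by
    rw [cutdown, ← cfcₙ_mul _ _ a (by fun_prop) hr0 (by fun_prop) hr0]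
    exact cfcₙ_congr fun t _ => Real.mul_self_sqrt (le_max_right _ _)
  have hrar : ε • cutdown a ε ≤ r * a * r := by
    nth_rw 2 [← cfcₙ_id' ℝ a]
    rw [← cfcₙ_mul _ _ a (by fun_prop) hr0 (by fun_prop) (by simp),
      ← cfcₙ_mul _ _ a (by fun_prop) (by simp) (by fun_prop) hr0, cutdown,
      ← cfcₙ_const_mul _ _ a (by fun_prop) (by simp [hε])]
    refine cfcₙ_mono (fun t _ => ?_) (hf0 := by simp [hε]) (hg0 := by simp)
    rw [mul_right_comm, Real.mul_self_sqrt (le_max_right _ _), mul_comm]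
    rcases le_total t ε with h | h
    · simp [h]
    · exact mul_le_mul_of_nonneg_left h (le_max_right _ _)
  have hrmr : -(η • cutdown a ε) ≤ r * (d - a) * r := by
    have := CStarAlgebra.star_left_conjugate_le_norm_smul (a := r) (ha.sub hd)
    rw [hr.star_eq, hrr, norm_sub_rev] at this
    calc -(η • cutdown a ε) ≤ -(r * (a - d) * r) :=
          neg_le_neg (this.trans (smul_le_smul_of_nonneg_right hda (cutdown_nonneg a ε)))
      _ = r * (d - a) * r := by noncomm_ring
  refine ⟨r, ?_⟩
  calc (ε - η) • cutdown a ε = ε • cutdown a ε + -(η • cutdown a ε) := by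
        rw [sub_smul, sub_eq_add_neg]
    _ ≤ r * a * r + r * (d - a) * r := add_le_add hrar hrmr
    _ = r * d * star r := by rw [hr.star_eq]; noncomm_ring

lemma CuGood.le_of_cuntzLE {L : {a : A // 0 ≤ a} → {a : A // 0 ≤ a} → Prop} (hL : CuGood L)
    {a b : {a : A // 0 ≤ a}} (hab : CuntzLE (a : A) b) : L a b := by
  obtain ⟨-, htrans, hher, hconj, hcut⟩ := hL
  refine hcut a b fun c ⟨ε, hε, hc⟩ => ?_
  obtain ⟨x, hx⟩ := hab (ε / 2) (by positivity)
  obtain ⟨r, hr⟩ := exists_smul_cutdown_le_conj a.2.isSelfAdjoint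
    (star_right_conjugate_nonneg b.2 x).isSelfAdjoint hε.le (η := ε / 2)
    (by rw [norm_sub_rev]; exact hx.le)
  let d : {a : A // 0 ≤ a} := ⟨r * x * b * star (r * x), star_right_conjugate_nonneg b.2 _⟩
  have hcd : (c : A) ∈ her (d : A) := by
    refine her_subset_of_mem (mem_her_of_smul_le (by linarith : 0 < ε - ε / 2)
      (cutdown_nonneg _ _) ?_) hc
    simpa only [d, star_mul, mul_assoc] using hr
  exact htrans (hher c d hcd) (hconj d b ⟨r * x, rfl⟩)

/-- the Cuntz subequivalence is the smallest preorder on `A₊` satisfying the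
three generating conditions. -/
theorem statement15 :
    CuGood (fun a b : {a : A // 0 ≤ a} => CuntzLE (a : A) (b : A)) ∧
    ∀ L, CuGood L → ∀ a b : {a : A // 0 ≤ a}, CuntzLE (a : A) (b : A) → L a b := by
  refine ⟨⟨fun a => cuntzLE_refl a.2, fun _ _ _ => CuntzLE.trans,
    fun a b => cuntzLE_of_mem_her a.2 b.2, ?_, ?_⟩, fun L hL a b => hL.le_of_cuntzLE⟩
  · rintro a b ⟨x, hx⟩
    exact hx ▸ cuntzLE_conj x b
  · refine fun a b H => cuntzLE_of_forall_cutdown a.2 fun ε hε => H ⟨_, cutdown_nonneg _ _⟩ ?_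
    exact ⟨ε / 2, by positivity,
      mem_her_of_le (cutdown_nonneg _ _) (cutdown_anti _ (by positivity) (by linarith))⟩
end
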